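/- arXiv:1707.09486 — 10 statements merged into one kernel-verified Lean document; each statement's English description precedes it below -/
import Mathlib

section
/- If problem (P1) is convexifiable, then the optimal value of (P1) equals the semi-Lagrangian dual value: inf(P1) = sup(D1), where both values are interpreted in the extended reals. -/
open Pointwise Matrix

/-! A real `β` below the optimal value gives a point `(0, β)` outside `𝒜`, hence, by
convexifiability, outside the closed convex hull of `𝒜`. A hyperplane separating it has a normal
`(u, r)` with nonnegative entries, because `𝒜` is stable under adding the nonnegative orthant; a
feasible point forces `r > 0`, and then `u / r` is a vector of multipliers whose dual value is at
least `β`. -/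

theorem dotProduct_nonpos_of_nonneg_of_nonpos {ι R : Type*} [Fintype ι] [Semiring R]
    [PartialOrder R] [IsOrderedRing R] {v w : ι → R} (hv : 0 ≤ v) (hw : w ≤ 0) : v ⬝ᵥ w ≤ 0 :=
  Finset.sum_nonpos fun i _ => mul_nonpos_of_nonneg_of_nonpos (hv i) (hw i)

theorem ContinuousLinearMap.apply_prod_eq_dotProduct_add {ι : Type*} [Fintype ι] [DecidableEq ι]
    (φ : ((ι → ℝ) × ℝ) →L[ℝ] ℝ) (p : (ι → ℝ) × ℝ) :
    φ p = (fun i => φ (Pi.single i 1, 0)) ⬝ᵥ p.1 + φ (0, 1) * p.2 := by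
  calc φ p = φ (∑ i, p.1 i • ((Pi.single i 1, 0) : (ι → ℝ) × ℝ) + p.2 • (0, 1)) := by
        congr 1
        ext i
        · simp [Prod.fst_sum, Finset.sum_apply, Pi.single_apply]
        · simp [Prod.snd_sum]
    _ = _ := by simp only [map_add, map_sum, map_smul, smul_eq_mul, dotProduct, mul_comm]

theorem LinearMap.nonneg_of_forall_lt_apply_add_smul {E : Type*} [AddCommGroup E] [Module ℝ E]
    (φ : E →ₗ[ℝ] ℝ) {a d : E} {α : ℝ} (h : ∀ s : ℝ, 0 ≤ s → α < φ (a + s • d)) : 0 ≤ φ d := by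
  by_contra! hd
  have ha : α < φ a := by simpa using h 0 le_rfl
  have := h ((φ a - α) / -φ d) (div_nonneg (by linarith) (by linarith))
  rw [map_add, map_smul, smul_eq_mul, div_mul_eq_mul_div, div_neg,
    mul_div_cancel_right₀ _ hd.ne] at this
  linarith

theorem exists_nonneg_separation {ι : Type*} [Fintype ι] {𝒜 : Set ((ι → ℝ) × ℝ)}
    (hne : 𝒜.Nonempty) (hup : ∀ a ∈ 𝒜, ∀ q, 0 ≤ q → a + q ∈ 𝒜) {p : (ι → ℝ) × ℝ}
    (hp : p ∉ closure (convexHull ℝ 𝒜)) :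
    ∃ (u : ι → ℝ) (r α : ℝ), 0 ≤ u ∧ 0 ≤ r ∧ u ⬝ᵥ p.1 + r * p.2 < α ∧
      ∀ a ∈ 𝒜, α < u ⬝ᵥ a.1 + r * a.2 := by
  classical
  obtain ⟨φ, α, hφp, hφ⟩ :=
    geometric_hahn_banach_point_closed (convex_convexHull ℝ 𝒜).closure isClosed_closure hp
  have hφ𝒜 : ∀ a ∈ 𝒜, α < φ a := fun a ha => hφ a (subset_closure (subset_convexHull ℝ 𝒜 ha))
  obtain ⟨a₀, ha₀⟩ := hne
  have hrec : ∀ q, 0 ≤ q → 0 ≤ φ q := fun q hq =>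
    (φ : ((ι → ℝ) × ℝ) →ₗ[ℝ] ℝ).nonneg_of_forall_lt_apply_add_smul fun s hs =>
      hφ𝒜 _ (hup a₀ ha₀ _ (smul_nonneg hs hq))
  refine ⟨fun i => φ (Pi.single i 1, 0), φ (0, 1), α, fun i => hrec _ ⟨?_, le_rfl⟩,
    hrec _ ⟨le_rfl, zero_le_one⟩, ?_, fun a ha => ?_⟩
  · exact Pi.single_nonneg.2 zero_le_one
  · rwa [← φ.apply_prod_eq_dotProduct_add]
  · rw [← φ.apply_prod_eq_dotProduct_add]
    exact hφ𝒜 a ha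

section Duality

variable {X ι : Type*} (S : Set X) (f : X → ℝ) (g : ι → X → ℝ)

def valueSet : Set ((ι → ℝ) × ℝ) :=
  (fun x => ((fun i => g i x), f x)) '' S + Set.Ici 0

variable {S f g}

theorem mk_mem_valueSet {x : X} (hx : x ∈ S) : ((fun i => g i x), f x) ∈ valueSet S f g :=
  ⟨_, ⟨x, hx, rfl⟩, 0, Set.self_mem_Ici, add_zero _⟩

theorem add_mem_valueSet {a q : (ι → ℝ) × ℝ} (ha : a ∈ valueSet S f g) (hq : 0 ≤ q) :
    a + q ∈ valueSet S f g := by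
  obtain ⟨y, hy, q', hq', rfl⟩ := ha
  exact ⟨y, hy, q' + q, add_nonneg hq' hq, (add_assoc _ _ _).symm⟩

theorem exists_feasible_le_of_mem_valueSet {β : ℝ} (h : ((0 : ι → ℝ), β) ∈ valueSet S f g) :
    ∃ x ∈ S, (∀ i, g i x ≤ 0) ∧ f x ≤ β := by
  obtain ⟨_, ⟨x, hx, rfl⟩, q, hq, hsum⟩ := h
  have hle : ((fun i => g i x), f x) ≤ ((0 : ι → ℝ), β) :=
    calc _ ≤ _ + q := le_add_of_nonneg_right hq
      _ = _ := hsum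
  exact ⟨x, hx, hle.1, hle.2⟩

variable [Fintype ι]

theorem exists_multiplier_of_separation {x₀ : X} (hx₀ : x₀ ∈ S) (hfeas : ∀ i, g i x₀ ≤ 0)
    {u : ι → ℝ} {r α β : ℝ} (hu : 0 ≤ u) (hr : 0 ≤ r) (hβ : r * β < α)
    (hsep : ∀ x ∈ S, α < u ⬝ᵥ (fun i => g i x) + r * f x) :
    ∃ v : ι → ℝ, 0 ≤ v ∧ ∀ x ∈ S, β ≤ f x + v ⬝ᵥ fun i => g i x := by
  have hgx₀ : u ⬝ᵥ (fun i => g i x₀) ≤ 0 := dotProduct_nonpos_of_nonneg_of_nonpos hu hfeas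
  have hr_pos : 0 < r := by
    refine hr.lt_of_ne fun h => ?_
    have hsep₀ := hsep x₀ hx₀
    rw [← h, zero_mul, add_zero] at hsep₀
    rw [← h, zero_mul] at hβ
    linarith
  refine ⟨r⁻¹ • u, smul_nonneg (inv_nonneg.2 hr_pos.le) hu, fun x hx => ?_⟩
  rw [smul_dotProduct, smul_eq_mul]
  calc β = r⁻¹ * (r * β) := by field_simp
    _ ≤ r⁻¹ * (r * f x + u ⬝ᵥ fun i => g i x) := by gcongr; linarith [hsep x hx]
    _ = f x + r⁻¹ * u ⬝ᵥ fun i => g i x := by field_simp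

variable (S f g)

theorem iSup_iInf_lagrangian_le :
    (⨆ u : {u : ι → ℝ // 0 ≤ u}, ⨅ x : S, ((f x + u.1 ⬝ᵥ fun i => g i x : ℝ) : EReal)) ≤
      ⨅ x : {x // x ∈ S ∧ ∀ i, g i x ≤ 0}, (f x : EReal) := by
  refine iSup_le fun u => le_iInf fun x => iInf_le_of_le ⟨x, x.2.1⟩ (EReal.coe_le_coe_iff.2 ?_)
  linarith [dotProduct_nonpos_of_nonneg_of_nonpos u.2 x.2.2]

theorem iInf_eq_iSup_iInf_of_convexifiable (hfeas : ∃ x ∈ S, ∀ i, g i x ≤ 0)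
    (hconv : {p : (ι → ℝ) × ℝ | p.1 = 0} ∩ closure (convexHull ℝ (valueSet S f g)) =
      {p | p.1 = 0} ∩ valueSet S f g) :
    ⨅ x : {x // x ∈ S ∧ ∀ i, g i x ≤ 0}, (f x : EReal) =
      ⨆ u : {u : ι → ℝ // 0 ≤ u}, ⨅ x : S, ((f x + u.1 ⬝ᵥ fun i => g i x : ℝ) : EReal) := by
  refine le_antisymm (EReal.ge_of_forall_gt_iff_ge.1 fun β hβ => ?_) (iSup_iInf_lagrangian_le S f g)
  obtain ⟨x₀, hx₀, hfeas₀⟩ := hfeas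
  have hβ𝒜 : ((0 : ι → ℝ), β) ∉ valueSet S f g := fun h =>
    let ⟨x, hx, hgx, hfx⟩ := exists_feasible_le_of_mem_valueSet h
    hβ.not_ge (iInf_le_of_le ⟨x, hx, hgx⟩ (EReal.coe_le_coe_iff.2 hfx))
  have hβcl : ((0 : ι → ℝ), β) ∉ closure (convexHull ℝ (valueSet S f g)) := fun h =>
    hβ𝒜 (hconv.subset ⟨rfl, h⟩).2
  obtain ⟨u, r, α, hu, hr, hβα, hsep⟩ :=
    exists_nonneg_separation ⟨_, mk_mem_valueSet hx₀⟩ (fun _ ha _ hq => add_mem_valueSet ha hq) hβcl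
  obtain ⟨v, hv, hL⟩ := exists_multiplier_of_separation hx₀ hfeas₀ hu hr (by simpa using hβα)
    fun x hx => hsep _ (mk_mem_valueSet hx)
  exact le_iSup_of_le ⟨v, hv⟩ (le_iInf fun x => EReal.coe_le_coe_iff.2 (hL x x.2))

end Duality

theorem stmt_0_general (n m : ℕ)
    (f : (Fin n → ℝ) → ℝ)
    (g : Fin (m + 1) → (Fin n → ℝ) → ℝ)
    (hne : ∃ x : Fin n → ℝ, (∀ j, 0 ≤ x j) ∧ ∀ i, g i x ≤ 0)
    (𝒜 : Set ((Fin (m + 1) → ℝ) × ℝ))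
    (h𝒜 : 𝒜 = (fun x : Fin n → ℝ => ((fun i => g i x), f x)) '' {x | ∀ j, 0 ≤ x j}
          + {q : (Fin (m + 1) → ℝ) × ℝ | (∀ i, 0 ≤ q.1 i) ∧ 0 ≤ q.2})
    (hconv : {p : (Fin (m + 1) → ℝ) × ℝ | p.1 = 0} ∩ closure (convexHull ℝ 𝒜)
           = {p : (Fin (m + 1) → ℝ) × ℝ | p.1 = 0} ∩ 𝒜) :
    (⨅ x : {x : Fin n → ℝ // (∀ j, 0 ≤ x j) ∧ ∀ i, g i x ≤ 0}, (f x.1 : EReal))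
      = ⨆ u : {u : Fin (m + 1) → ℝ // ∀ i, 0 ≤ u i},
          ⨅ x : {x : Fin n → ℝ // ∀ j, 0 ≤ x j},
            ((f x.1 + ∑ i, u.1 i * g i x.1 : ℝ) : EReal) := by
  subst h𝒜
  exact iInf_eq_iSup_iInf_of_convexifiable ({x | ∀ j, 0 ≤ x j} : Set (Fin n → ℝ)) f g hne hconv

/-- If problem (P1) is convexifiable, then inf(P1) = sup(D1) in the
extended reals, where (D1) is the semi-Lagrangian dual of (P1). -/
theorem stmt_0 (n m : ℕ) (hn : 1 ≤ n)
    (A : Matrix (Fin n) (Fin n) ℝ) (hA : A.IsSymm)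
    (b : Fin n → ℝ) (c : ℝ)
    (A' : Fin (m + 1) → Matrix (Fin n) (Fin n) ℝ) (hA' : ∀ i, (A' i).IsSymm)
    (b' : Fin (m + 1) → Fin n → ℝ) (c' : Fin (m + 1) → ℝ)
    (f : (Fin n → ℝ) → ℝ) (hf : ∀ x, f x = x ⬝ᵥ A *ᵥ x + b ⬝ᵥ x + c)
    (g : Fin (m + 1) → (Fin n → ℝ) → ℝ)
    (hg : ∀ i x, g i x = x ⬝ᵥ A' i *ᵥ x + b' i ⬝ᵥ x + c' i)
    (hne : ∃ x : Fin n → ℝ, (∀ j, 0 ≤ x j) ∧ ∀ i, g i x ≤ 0)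
    (𝒜 : Set ((Fin (m + 1) → ℝ) × ℝ))
    (h𝒜 : 𝒜 = (fun x : Fin n → ℝ => ((fun i => g i x), f x)) '' {x | ∀ j, 0 ≤ x j}
          + {q : (Fin (m + 1) → ℝ) × ℝ | (∀ i, 0 ≤ q.1 i) ∧ 0 ≤ q.2})
    (hconv : {p : (Fin (m + 1) → ℝ) × ℝ | p.1 = 0} ∩ closure (convexHull ℝ 𝒜)
           = {p : (Fin (m + 1) → ℝ) × ℝ | p.1 = 0} ∩ 𝒜) :
    (⨅ x : {x : Fin n → ℝ // (∀ j, 0 ≤ x j) ∧ ∀ i, g i x ≤ 0}, (f x.1 : EReal))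
      = ⨆ u : {u : Fin (m + 1) → ℝ // ∀ i, 0 ≤ u i},
          ⨅ x : {x : Fin n → ℝ // ∀ j, 0 ≤ x j},
            ((f x.1 + ∑ i, u.1 i * g i x.1 : ℝ) : EReal) :=
  stmt_0_general n m f g hne 𝒜 h𝒜 hconv
end

section
/- If the set 𝒜 is closed and convex (i.e., problem (P1) is strongly convexifiable) and inf(P1) > −∞, then the minimum of (P1) is attained at some feasible point x̄ ∈ ℝ^n_+, and min(P1) = sup(D1). -/
open Pointwise Matrix

/-!
Closedness of `𝒜` makes `{r | (0, r) ∈ 𝒜}` a closed half-line `[μ, ∞)`, and `(0, μ) ∈ 𝒜`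
produces a feasible point of value `μ`, the minimum. For `r < μ` the point `(0, r)` lies outside
the closed convex set `𝒜`, so a continuous functional strictly separates them. Since `𝒜` is stable
under adding the nonnegative orthant, the functional has nonnegative weights `(u, u₀)`; a feasible
point forces `u₀ > 0`, and `u / u₀` is a vector of multipliers whose Lagrangian is bounded below
by `r` on `ℝⁿ₊`.
-/

theorem nonneg_of_forall_lt_add_mul {𝕜 : Type*} [Field 𝕜] [LinearOrder 𝕜]
    [IsStrictOrderedRing 𝕜] {α a b : 𝕜} (h : ∀ t, 0 ≤ t → α < a + t * b) : 0 ≤ b := by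
  by_contra! hb
  have h₀ := h 0 le_rfl
  have := h ((a - α) / -b) (div_nonneg (by linarith [h₀]) (by linarith))
  rw [div_mul_eq_mul_div, div_neg, mul_div_cancel_right₀ _ hb.ne] at this
  linarith

theorem LinearMap.apply_prod_eq_sum {R M ι : Type*} [CommSemiring R] [AddCommMonoid M] [Module R M]
    [Fintype ι] [DecidableEq ι] (G : ((ι → R) × R) →ₗ[R] M) (y : ι → R) (t : R) :
    G (y, t) = ∑ i, y i • G (Pi.single i 1, 0) + t • G (0, 1) := by
  have hy : G (y, 0) = ∑ i, y i • G (Pi.single i 1, 0) := by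
    simpa using congrArg (G ∘ₗ LinearMap.inl R (ι → R) R) (pi_eq_sum_univ' y)
  have ht : G (0, t) = t • G (0, 1) := by
    simpa using G.map_smul t (0, 1)
  rw [← hy, ← ht, ← map_add, Prod.mk_add_mk, add_zero, zero_add]

section epiImage

variable {X ι : Type*}

/-- The set `𝒜` of the informal statement, for the constraint set `K` in place of `ℝⁿ₊`. -/
def epiImage (K : Set X) (g : ι → X → ℝ) (f : X → ℝ) : Set ((ι → ℝ) × ℝ) :=
  (fun x => ((fun i => g i x), f x)) '' K + {q | (∀ i, 0 ≤ q.1 i) ∧ 0 ≤ q.2}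

variable {K : Set X} {g : ι → X → ℝ} {f : X → ℝ}

theorem mk_mem_epiImage {x : X} (hx : x ∈ K) : ((fun i => g i x), f x) ∈ epiImage K g f :=
  ⟨_, ⟨x, hx, rfl⟩, 0, ⟨fun _ => le_rfl, le_rfl⟩, add_zero _⟩

theorem add_mem_epiImage {z q : (ι → ℝ) × ℝ} (hz : z ∈ epiImage K g f) (hq₁ : ∀ i, 0 ≤ q.1 i)
    (hq₂ : 0 ≤ q.2) : z + q ∈ epiImage K g f := by
  obtain ⟨a, ha, p, hp, rfl⟩ := hz
  exact ⟨a, ha, p + q, ⟨fun i => add_nonneg (hp.1 i) (hq₁ i), add_nonneg hp.2 hq₂⟩,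
    (add_assoc _ _ _).symm⟩

theorem zero_mk_mem_epiImage_iff {r : ℝ} :
    ((0 : ι → ℝ), r) ∈ epiImage K g f ↔ ∃ x ∈ K, (∀ i, g i x ≤ 0) ∧ f x ≤ r := by
  constructor
  · rintro ⟨_, ⟨x, hx, rfl⟩, q, ⟨hq₁, hq₂⟩, hsum⟩
    obtain ⟨hsum₁, hsum₂⟩ := Prod.ext_iff.1 hsum
    dsimp only [Prod.fst_add, Prod.snd_add] at hsum₁ hsum₂
    refine ⟨x, hx, fun i => ?_, by linarith⟩
    have := congrFun hsum₁ i
    simp only [Pi.add_apply, Pi.zero_apply] at this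
    linarith [hq₁ i]
  · rintro ⟨x, hx, hg, hf⟩
    convert add_mem_epiImage (mk_mem_epiImage (g := g) (f := f) hx)
      (q := (fun i => -g i x, r - f x)) (fun i => neg_nonneg.2 (hg i)) (sub_nonneg.2 hf) using 1
    ext <;> simp

theorem exists_isMinOn_of_isClosed_epiImage (hclosed : IsClosed (epiImage K g f))
    (hne : ∃ x ∈ K, ∀ i, g i x ≤ 0) (hbdd : BddBelow (f '' {x | x ∈ K ∧ ∀ i, g i x ≤ 0})) :
    ∃ x ∈ {x | x ∈ K ∧ ∀ i, g i x ≤ 0}, IsMinOn f {x | x ∈ K ∧ ∀ i, g i x ≤ 0} x := by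
  set T := {r : ℝ | ((0 : ι → ℝ), r) ∈ epiImage K g f}
  have hT : ∀ r, r ∈ T ↔ ∃ x ∈ K, (∀ i, g i x ≤ 0) ∧ f x ≤ r := fun _ =>
    zero_mk_mem_epiImage_iff
  have hT_closed : IsClosed T := hclosed.preimage (by fun_prop)
  obtain ⟨x₀, hx₀, hx₀g⟩ := hne
  obtain ⟨μ, hμ⟩ := hbdd
  have hT_bdd : BddBelow T := ⟨μ, fun r hr => by
    obtain ⟨x, hx, hg, hfr⟩ := (hT r).1 hr
    exact (hμ ⟨x, ⟨hx, hg⟩, rfl⟩).trans hfr⟩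
  have hT_ne : T.Nonempty := ⟨f x₀, (hT _).2 ⟨x₀, hx₀, hx₀g, le_rfl⟩⟩
  obtain ⟨x, hx, hg, hfx⟩ := (hT _).1 (hT_closed.csInf_mem hT_ne hT_bdd)
  exact ⟨x, ⟨hx, hg⟩, fun y hy =>
    hfx.trans (csInf_le hT_bdd ((hT _).2 ⟨y, hy.1, hy.2, le_rfl⟩))⟩

theorem exists_separating_weights_of_notMem_epiImage [Fintype ι]
    (hclosed : IsClosed (epiImage K g f)) (hconvex : Convex ℝ (epiImage K g f)) {x₀ : X}
    (hx₀ : x₀ ∈ K) {r : ℝ} (hr : ((0 : ι → ℝ), r) ∉ epiImage K g f) :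
    ∃ (u : ι → ℝ) (u₀ : ℝ), (∀ i, 0 ≤ u i) ∧ 0 ≤ u₀ ∧
      ∀ x ∈ K, u₀ * r < u₀ * f x + ∑ i, u i * g i x := by
  classical
  obtain ⟨G, α, hGr, hGA⟩ := geometric_hahn_banach_point_closed hconvex hclosed hr
  set u : ι → ℝ := fun i => G (Pi.single i 1, 0)
  set u₀ : ℝ := G (0, 1)
  have hG : ∀ y t, G (y, t) = u₀ * t + ∑ i, u i * y i := fun y t => by
    have := (G : ((ι → ℝ) × ℝ) →ₗ[ℝ] ℝ).apply_prod_eq_sum y t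
    simp only [ContinuousLinearMap.coe_coe, smul_eq_mul] at this
    rw [this, add_comm]
    simp only [u, u₀, mul_comm]
  have hG_nonneg : ∀ q : (ι → ℝ) × ℝ, (∀ i, 0 ≤ q.1 i) → 0 ≤ q.2 → 0 ≤ G q :=
    fun q hq₁ hq₂ => nonneg_of_forall_lt_add_mul fun t ht => by
      simpa using hGA _ (add_mem_epiImage (mk_mem_epiImage hx₀) (q := t • q)
        (fun i => smul_nonneg ht (hq₁ i)) (smul_nonneg ht hq₂))
  refine ⟨u, u₀,
    fun i => hG_nonneg _ (fun j => by simp [Pi.single_apply]; split_ifs <;> norm_num) le_rfl,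
    hG_nonneg _ (fun _ => le_rfl) zero_le_one, fun x hx => ?_⟩
  have h₁ := hGA _ (mk_mem_epiImage hx)
  rw [hG] at hGr h₁
  simp only [Pi.zero_apply, mul_zero, Finset.sum_const_zero, add_zero] at hGr
  linarith

theorem exists_multipliers_of_notMem_epiImage [Fintype ι] (hclosed : IsClosed (epiImage K g f))
    (hconvex : Convex ℝ (epiImage K g f)) {x₀ : X} (hx₀ : x₀ ∈ K) (hx₀g : ∀ i, g i x₀ ≤ 0)
    {r : ℝ} (hr : ((0 : ι → ℝ), r) ∉ epiImage K g f) :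
    ∃ u : ι → ℝ, (∀ i, 0 ≤ u i) ∧ ∀ x ∈ K, r ≤ f x + ∑ i, u i * g i x := by
  obtain ⟨u, u₀, hu, hu₀, hsep⟩ :=
    exists_separating_weights_of_notMem_epiImage hclosed hconvex hx₀ hr
  have hu₀_pos : 0 < u₀ := by
    refine hu₀.lt_of_ne fun h => ?_
    have := hsep x₀ hx₀
    rw [← h, zero_mul, zero_mul, zero_add] at this
    exact this.not_ge
      (Finset.sum_nonpos fun i _ => mul_nonpos_of_nonneg_of_nonpos (hu i) (hx₀g i))
  refine ⟨fun i => u i / u₀, fun i => div_nonneg (hu i) hu₀, fun x hx => ?_⟩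
  have hdiv : f x + ∑ i, u i / u₀ * g i x = (u₀ * f x + ∑ i, u i * g i x) / u₀ := by
    simp_rw [div_mul_eq_mul_div, ← Finset.sum_div]
    field_simp
  rw [hdiv, le_div_iff₀ hu₀_pos, mul_comm]
  exact (hsep x hx).le

end epiImage

theorem bddBelow_image_of_bot_lt_iInf {α : Type*} {s : Set α} {φ : α → ℝ}
    (h : ⊥ < ⨅ x : s, (φ x : EReal)) : BddBelow (φ '' s) := by
  obtain ⟨r, -, hr⟩ := EReal.lt_iff_exists_real_btwn.1 h
  exact ⟨r, Set.forall_mem_image.2 fun x hx =>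
    EReal.coe_le_coe_iff.1 (hr.le.trans (iInf_le (fun x : s => (φ x : EReal)) ⟨x, hx⟩))⟩

theorem stmt_1_general (n m : ℕ)
    (f : (Fin n → ℝ) → ℝ)
    (g : Fin (m + 1) → (Fin n → ℝ) → ℝ)
    (hne : ∃ x : Fin n → ℝ, (∀ j, 0 ≤ x j) ∧ ∀ i, g i x ≤ 0)
    (𝒜 : Set ((Fin (m + 1) → ℝ) × ℝ))
    (h𝒜 : 𝒜 = (fun x : Fin n → ℝ => ((fun i => g i x), f x)) '' {x | ∀ j, 0 ≤ x j}
          + {q : (Fin (m + 1) → ℝ) × ℝ | (∀ i, 0 ≤ q.1 i) ∧ 0 ≤ q.2})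
    (hclosed : IsClosed 𝒜) (hconvex : Convex ℝ 𝒜)
    (hbdd : (⊥ : EReal) <
        ⨅ x : {x : Fin n → ℝ // (∀ j, 0 ≤ x j) ∧ ∀ i, g i x ≤ 0}, (f x.1 : EReal)) :
    ∃ xbar : Fin n → ℝ, (∀ j, 0 ≤ xbar j) ∧ (∀ i, g i xbar ≤ 0) ∧
      (∀ x : Fin n → ℝ, (∀ j, 0 ≤ x j) → (∀ i, g i x ≤ 0) → f xbar ≤ f x) ∧
      (f xbar : EReal)
        = ⨆ u : {u : Fin (m + 1) → ℝ // ∀ i, 0 ≤ u i},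
            ⨅ x : {x : Fin n → ℝ // ∀ j, 0 ≤ x j},
              ((f x.1 + ∑ i, u.1 i * g i x.1 : ℝ) : EReal) := by
  subst h𝒜
  obtain ⟨x₀, hx₀, hx₀g⟩ := hne
  obtain ⟨xbar, ⟨hxbar, hgxbar⟩, hmin⟩ :=
    exists_isMinOn_of_isClosed_epiImage hclosed ⟨x₀, hx₀, hx₀g⟩
      (bddBelow_image_of_bot_lt_iInf hbdd)
  refine ⟨xbar, hxbar, hgxbar, fun x hx hgx => hmin ⟨hx, hgx⟩, le_antisymm ?_ ?_⟩
  · refine EReal.ge_of_forall_gt_iff_ge.1 fun r hr => ?_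
    have hr_notMem : ((0 : Fin (m + 1) → ℝ), r) ∉ epiImage {x | ∀ j, 0 ≤ x j} g f := by
      rw [zero_mk_mem_epiImage_iff]
      rintro ⟨x, hx, hgx, hfx⟩
      linarith [isMinOn_iff.1 hmin x ⟨hx, hgx⟩, EReal.coe_lt_coe_iff.1 hr]
    obtain ⟨u, hu, hru⟩ :=
      exists_multipliers_of_notMem_epiImage hclosed hconvex hx₀ hx₀g hr_notMem
    exact le_iSup_of_le ⟨u, hu⟩ (le_iInf fun x => EReal.coe_le_coe (hru x.1 x.2))
  · refine iSup_le fun u => (iInf_le _ ⟨xbar, hxbar⟩).trans (EReal.coe_le_coe_iff.2 ?_)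
    have : ∑ i, u.1 i * g i xbar ≤ 0 :=
      Finset.sum_nonpos fun i _ => mul_nonpos_of_nonneg_of_nonpos (u.2 i) (hgxbar i)
    linarith

/-- If the set 𝒜 is closed and convex (strong convexifiability) and
inf(P1) > −∞, then the minimum of (P1) is attained at some feasible point x̄ and
min(P1) = sup(D1). -/
theorem stmt_1 (n m : ℕ) (hn : 1 ≤ n)
    (A : Matrix (Fin n) (Fin n) ℝ) (hA : A.IsSymm)
    (b : Fin n → ℝ) (c : ℝ)
    (A' : Fin (m + 1) → Matrix (Fin n) (Fin n) ℝ) (hA' : ∀ i, (A' i).IsSymm)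
    (b' : Fin (m + 1) → Fin n → ℝ) (c' : Fin (m + 1) → ℝ)
    (f : (Fin n → ℝ) → ℝ) (hf : ∀ x, f x = x ⬝ᵥ A *ᵥ x + b ⬝ᵥ x + c)
    (g : Fin (m + 1) → (Fin n → ℝ) → ℝ)
    (hg : ∀ i x, g i x = x ⬝ᵥ A' i *ᵥ x + b' i ⬝ᵥ x + c' i)
    (hne : ∃ x : Fin n → ℝ, (∀ j, 0 ≤ x j) ∧ ∀ i, g i x ≤ 0)
    (𝒜 : Set ((Fin (m + 1) → ℝ) × ℝ))
    (h𝒜 : 𝒜 = (fun x : Fin n → ℝ => ((fun i => g i x), f x)) '' {x | ∀ j, 0 ≤ x j}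
          + {q : (Fin (m + 1) → ℝ) × ℝ | (∀ i, 0 ≤ q.1 i) ∧ 0 ≤ q.2})
    (hclosed : IsClosed 𝒜) (hconvex : Convex ℝ 𝒜)
    (hbdd : (⊥ : EReal) <
        ⨅ x : {x : Fin n → ℝ // (∀ j, 0 ≤ x j) ∧ ∀ i, g i x ≤ 0}, (f x.1 : EReal)) :
    ∃ xbar : Fin n → ℝ, (∀ j, 0 ≤ xbar j) ∧ (∀ i, g i xbar ≤ 0) ∧
      (∀ x : Fin n → ℝ, (∀ j, 0 ≤ x j) → (∀ i, g i x ≤ 0) → f xbar ≤ f x) ∧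
      (f xbar : EReal)
        = ⨆ u : {u : Fin (m + 1) → ℝ // ∀ i, 0 ≤ u i},
            ⨅ x : {x : Fin n → ℝ // ∀ j, 0 ≤ x j},
              ((f x.1 + ∑ i, u.1 i * g i x.1 : ℝ) : EReal) :=
  stmt_1_general n m f g hne 𝒜 h𝒜 hclosed hconvex hbdd
end

section
/- If B is strictly copositive, then the set Υ = {(xᵀBx, xᵀAx) : x ∈ ℝ^n_+} + ℝ²_+ is closed and convex; consequently the homogeneous quadratic program min{xᵀAx : x ∈ ℝ^n_+, xᵀBx ≤ 1} is strongly convexifiable, i.e., its translated set {(xᵀBx − 1, xᵀAx) : x ∈ ℝ^n_+} + ℝ²_+ is closed and convex. -/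
open Pointwise Matrix

lemma stmt3_contQF {n : ℕ} (M : Matrix (Fin n) (Fin n) ℝ) :
    Continuous fun x : Fin n → ℝ => x ⬝ᵥ M *ᵥ x := by
  show Continuous fun x : Fin n → ℝ => ∑ i, x i * ∑ j, M i j * x j
  fun_prop

lemma stmt3_smul {n : ℕ} (M : Matrix (Fin n) (Fin n) ℝ) (c : ℝ) (x : Fin n → ℝ) :
    (c • x) ⬝ᵥ M *ᵥ (c • x) = c ^ 2 * (x ⬝ᵥ M *ᵥ x) := by
  rw [Matrix.mulVec_smul, smul_dotProduct, dotProduct_smul,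
    smul_eq_mul, smul_eq_mul]; ring

lemma stmt3_orthClosed {n : ℕ} : IsClosed {x : Fin n → ℝ | ∀ j, 0 ≤ x j} := by
  have : {x : Fin n → ℝ | ∀ j, 0 ≤ x j} = ⋂ j, {x | 0 ≤ x j} := by ext; simp
  rw [this]; exact isClosed_iInter fun j => isClosed_le continuous_const (continuous_apply j)

lemma stmt3_key (n : ℕ) (hn : 1 ≤ n) (A B : Matrix (Fin n) (Fin n) ℝ)
    (hBcop : ∀ x : Fin n → ℝ, (∀ j, 0 ≤ x j) → x ≠ 0 → 0 < x ⬝ᵥ B *ᵥ x) :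
    ∃ m : ℝ, m ≤ 0 ∧ ∀ t : ℝ,
      (fun x : Fin n → ℝ => (x ⬝ᵥ B *ᵥ x - t, x ⬝ᵥ A *ᵥ x)) '' {x | ∀ j, 0 ≤ x j}
        + {q : ℝ × ℝ | 0 ≤ q.1 ∧ 0 ≤ q.2}
      = {p : ℝ × ℝ | 0 ≤ p.1 + t ∧ m * (p.1 + t) ≤ p.2} := by
  classical
  set f : (Fin n → ℝ) → ℝ := fun x => x ⬝ᵥ B *ᵥ x with hf
  set g : (Fin n → ℝ) → ℝ := fun x => x ⬝ᵥ A *ᵥ x with hg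
  have hfc : Continuous f := stmt3_contQF B
  have hgc : Continuous g := stmt3_contQF A
  have hfsmul : ∀ (c : ℝ) x, f (c • x) = c ^ 2 * f x := fun c x => stmt3_smul B c x
  have hgsmul : ∀ (c : ℝ) x, g (c • x) = c ^ 2 * g x := fun c x => stmt3_smul A c x
  have hf0 : f 0 = 0 := by simp [hf]
  have hg0 : g 0 = 0 := by simp [hg]
  -- the compact set K
  set K : Set (Fin n → ℝ) := {x | (∀ j, 0 ≤ x j) ∧ f x = 1} with hK
  -- K is nonempty
  have hKne : K.Nonempty := by
    set y : Fin n → ℝ := Pi.single ⟨0, hn⟩ 1 with hy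
    have hynn : ∀ j, 0 ≤ y j := by
      intro j
      rcases eq_or_ne j ⟨0, hn⟩ with rfl | hj
      · simp [hy]
      · simp [hy, Pi.single_apply, hj]
    have hyne : y ≠ 0 := by
      intro h
      have := congrFun h ⟨0, hn⟩
      simp [hy] at this
    have hfy : 0 < f y := hBcop y hynn hyne
    refine ⟨(Real.sqrt (f y))⁻¹ • y, fun j => ?_, ?_⟩
    · exact mul_nonneg (inv_nonneg.2 (Real.sqrt_nonneg _)) (hynn j)
    · rw [hfsmul]
      rw [inv_pow, Real.sq_sqrt hfy.le]
      field_simp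
  -- the positive lower bound on the sphere
  have hSc : IsCompact ({x : Fin n → ℝ | ∀ j, 0 ≤ x j} ∩ Metric.sphere 0 1) :=
    (isCompact_sphere (0 : Fin n → ℝ) 1).inter_left stmt3_orthClosed
  have hSne : ({x : Fin n → ℝ | ∀ j, 0 ≤ x j} ∩ Metric.sphere 0 1).Nonempty := by
    obtain ⟨x, hxnn, hfx⟩ := hKne
    have hx0 : x ≠ 0 := by
      intro h; rw [h, hf0] at hfx; norm_num at hfx
    refine ⟨‖x‖⁻¹ • x, fun j => mul_nonneg (inv_nonneg.2 (norm_nonneg _)) (hxnn j), ?_⟩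
    simp only [Metric.mem_sphere, dist_zero_right]
    exact norm_smul_inv_norm hx0
  obtain ⟨z, hzS, hz⟩ := hSc.exists_isMinOn hSne hfc.continuousOn
  have hzne : z ≠ 0 := by
    intro h
    have := hzS.2
    rw [h] at this
    simp at this
  have hc : 0 < f z := hBcop z hzS.1 hzne
  -- K is compact
  have hKc : IsCompact K := by
    apply Metric.isCompact_of_isClosed_isBounded
    · exact stmt3_orthClosed.inter (isClosed_eq hfc continuous_const)
    · apply (Metric.isBounded_closedBall (x := (0 : Fin n → ℝ)) (r := Real.sqrt (1 / f z))).subset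
      intro x ⟨hxnn, hfx⟩
      have hx0 : x ≠ 0 := by
        intro h; rw [h, hf0] at hfx; norm_num at hfx
      have hxn : 0 < ‖x‖ := norm_pos_iff.2 hx0
      have hu : ‖x‖⁻¹ • x ∈ {x : Fin n → ℝ | ∀ j, 0 ≤ x j} ∩ Metric.sphere 0 1 := by
        refine ⟨fun j => mul_nonneg (inv_nonneg.2 (norm_nonneg _)) (hxnn j), ?_⟩
        simp only [Set.mem_inter_iff, Metric.mem_sphere, dist_zero_right]
        exact norm_smul_inv_norm hx0
      have h1 : f z ≤ f (‖x‖⁻¹ • x) := hz hu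
      rw [hfsmul] at h1
      have h2 : ‖x‖ ^ 2 * f z ≤ 1 := by
        have h3 : ‖x‖ ^ 2 * f z ≤ ‖x‖ ^ 2 * ((‖x‖⁻¹) ^ 2 * f x) :=
          mul_le_mul_of_nonneg_left h1 (by positivity)
        have h4 : ‖x‖ ^ 2 * ((‖x‖⁻¹) ^ 2 * f x) = f x := by
          field_simp
        rw [h4, hfx] at h3; exact h3
      simp only [Metric.mem_closedBall, dist_zero_right]
      rw [Real.le_sqrt (norm_nonneg x) (by positivity)]
      rw [le_div_iff₀ hc]
      exact h2
  -- the minimum of g on K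
  obtain ⟨x₀, hx₀K, hx₀⟩ := hKc.exists_isMinOn hKne hgc.continuousOn
  refine ⟨min (g x₀) 0, min_le_right _ _, fun t => ?_⟩
  set m := min (g x₀) 0 with hm
  have hm0 : m ≤ 0 := min_le_right _ _
  -- forward facts
  have hfx0 : ∀ x : Fin n → ℝ, (∀ j, 0 ≤ x j) → 0 ≤ f x := by
    intro x hx
    rcases eq_or_ne x 0 with rfl | hx0
    · simp [hf0]
    · exact (hBcop x hx hx0).le
  have hmg : ∀ x : Fin n → ℝ, (∀ j, 0 ≤ x j) → m * f x ≤ g x := by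
    intro x hx
    rcases eq_or_ne x 0 with rfl | hx0
    · simp [hf0, hg0]
    · have hfpos : 0 < f x := hBcop x hx hx0
      set r := Real.sqrt (f x) with hr
      have hrpos : 0 < r := Real.sqrt_pos.2 hfpos
      have hu : r⁻¹ • x ∈ K := by
        refine ⟨fun j => mul_nonneg (inv_nonneg.2 hrpos.le) (hx j), ?_⟩
        rw [hfsmul, inv_pow, hr, Real.sq_sqrt hfpos.le]
        field_simp
      have h1 : g x₀ ≤ g (r⁻¹ • x) := hx₀ hu
      have h2 : g (r⁻¹ • x) = (f x)⁻¹ * g x := by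
        rw [hgsmul, inv_pow, hr, Real.sq_sqrt hfpos.le]
      have h3 : m ≤ (f x)⁻¹ * g x := le_trans (min_le_left _ _) (h2 ▸ h1)
      calc m * f x ≤ ((f x)⁻¹ * g x) * f x := mul_le_mul_of_nonneg_right h3 hfpos.le
        _ = g x := by field_simp
  ext ⟨b, a⟩
  simp only [Set.mem_add, Set.mem_image, Set.mem_setOf_eq]
  constructor
  · rintro ⟨p, ⟨x, hx, rfl⟩, w, ⟨hw1, hw2⟩, hsum⟩
    have hb : b = f x - t + w.1 := by
      have := congrArg Prod.fst hsum; simpa using this.symm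
    have ha : a = g x + w.2 := by
      have := congrArg Prod.snd hsum; simpa using this.symm
    have hfx := hfx0 x hx
    have hgx := hmg x hx
    constructor
    · rw [hb]; linarith
    · rw [hb, ha]
      have hexp : m * (f x - t + w.1 + t) = m * f x + m * w.1 := by ring
      rw [hexp]
      nlinarith
  · rintro ⟨h1, h2⟩
    rcases le_or_gt 0 (g x₀) with hμ | hμ
    · have hmz : m = 0 := min_eq_right hμ
      rw [hmz, zero_mul] at h2
      refine ⟨(f 0 - t, g 0), ⟨0, fun j => le_refl 0, rfl⟩, (b + t, a), ⟨h1, h2⟩, ?_⟩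
      rw [hf0, hg0]
      apply Prod.ext <;> simp
    · have hmz : m = g x₀ := min_eq_left hμ.le
      rw [hmz] at h2
      set s := Real.sqrt (b + t) with hs
      have hs2 : s ^ 2 = b + t := Real.sq_sqrt h1
      refine ⟨(f (s • x₀) - t, g (s • x₀)), ⟨s • x₀,
        fun j => mul_nonneg (Real.sqrt_nonneg _) (hx₀K.1 j), rfl⟩,
        (0, a - (b + t) * g x₀), ⟨le_refl 0, show (0:ℝ) ≤ a - (b + t) * g x₀ by linarith⟩, ?_⟩
      rw [hfsmul, hgsmul, hx₀K.2, hs2]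
      apply Prod.ext <;> simp <;> ring

lemma stmt3_closed_convex (m t : ℝ) :
    IsClosed {p : ℝ × ℝ | 0 ≤ p.1 + t ∧ m * (p.1 + t) ≤ p.2} ∧
    Convex ℝ {p : ℝ × ℝ | 0 ≤ p.1 + t ∧ m * (p.1 + t) ≤ p.2} := by
  constructor
  · have : {p : ℝ × ℝ | 0 ≤ p.1 + t ∧ m * (p.1 + t) ≤ p.2}
        = {p : ℝ × ℝ | 0 ≤ p.1 + t} ∩ {p : ℝ × ℝ | m * (p.1 + t) ≤ p.2} := rfl
    rw [this]
    exact (isClosed_le continuous_const (by fun_prop)).inter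
      (isClosed_le (by fun_prop) continuous_snd)
  · rintro ⟨b1, a1⟩ ⟨hp1, hp2⟩ ⟨b2, a2⟩ ⟨hq1, hq2⟩ α β hα hβ hαβ
    simp only [Set.mem_setOf_eq, Prod.smul_mk, Prod.mk_add_mk, smul_eq_mul] at *
    have e1 : α * b1 + β * b2 + t = α * (b1 + t) + β * (b2 + t) := by
      linear_combination (-t) * hαβ
    have e2 : m * (α * b1 + β * b2 + t) = α * (m * (b1 + t)) + β * (m * (b2 + t)) := by
      linear_combination (-(m * t)) * hαβ
    constructor
    · rw [e1]
      have := mul_nonneg hα hp1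
      have := mul_nonneg hβ hq1
      linarith
    · rw [e2]
      have := mul_le_mul_of_nonneg_left hp2 hα
      have := mul_le_mul_of_nonneg_left hq2 hβ
      linarith

/-- If B is strictly copositive, then Υ = {(xᵀBx, xᵀAx) : x ∈ ℝ^n_+} + ℝ²_+
is closed and convex; consequently the homogeneous quadratic program
min{xᵀAx : x ∈ ℝ^n_+, xᵀBx ≤ 1} is strongly convexifiable, i.e. its translated set
{(xᵀBx − 1, xᵀAx) : x ∈ ℝ^n_+} + ℝ²_+ is closed and convex. -/
theorem stmt_3 (n : ℕ) (hn : 1 ≤ n)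
    (A B : Matrix (Fin n) (Fin n) ℝ) (hA : A.IsSymm) (hB : B.IsSymm)
    (hBcop : ∀ x : Fin n → ℝ, (∀ j, 0 ≤ x j) → x ≠ 0 → 0 < x ⬝ᵥ B *ᵥ x) :
    (IsClosed ((fun x : Fin n → ℝ => (x ⬝ᵥ B *ᵥ x, x ⬝ᵥ A *ᵥ x)) '' {x | ∀ j, 0 ≤ x j}
          + {q : ℝ × ℝ | 0 ≤ q.1 ∧ 0 ≤ q.2}) ∧
      Convex ℝ ((fun x : Fin n → ℝ => (x ⬝ᵥ B *ᵥ x, x ⬝ᵥ A *ᵥ x)) '' {x | ∀ j, 0 ≤ x j}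
          + {q : ℝ × ℝ | 0 ≤ q.1 ∧ 0 ≤ q.2})) ∧
    (IsClosed ((fun x : Fin n → ℝ => (x ⬝ᵥ B *ᵥ x - 1, x ⬝ᵥ A *ᵥ x)) '' {x | ∀ j, 0 ≤ x j}
          + {q : ℝ × ℝ | 0 ≤ q.1 ∧ 0 ≤ q.2}) ∧
      Convex ℝ ((fun x : Fin n → ℝ => (x ⬝ᵥ B *ᵥ x - 1, x ⬝ᵥ A *ᵥ x)) '' {x | ∀ j, 0 ≤ x j}
          + {q : ℝ × ℝ | 0 ≤ q.1 ∧ 0 ≤ q.2})) := by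
  obtain ⟨m, hm0, hkey⟩ := stmt3_key n hn A B hBcop
  have h0 := hkey 0
  have h1 := hkey 1
  have heq : (fun x : Fin n → ℝ => (x ⬝ᵥ B *ᵥ x - 0, x ⬝ᵥ A *ᵥ x))
      = fun x : Fin n → ℝ => (x ⬝ᵥ B *ᵥ x, x ⬝ᵥ A *ᵥ x) := by
    funext x; simp
  rw [heq] at h0
  rw [h0, h1]
  exact ⟨stmt3_closed_convex m 0, stmt3_closed_convex m 1⟩
end

section
/- Suppose the regularity assumption (RA) holds and {d ∈ ℝ^n_+ : dᵀAd ≤ 0, a_jᵀd = 0 for all j = 1, …, m, and d_i = 0 for all 1 ≤ i ≤ s} = {0}. Then ({0_{ℝ^{4m+2s}}} × ℝ) ∩ cl conv 𝒜_{P_D} = ({0_{ℝ^{4m+2s}}} × ℝ) ∩ 𝒜_{P_D}; that is, the continuous reformulation (P_D) of the mixed integer quadratic program (P_M) is convexifiable. -/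
/-!
Take (0, r) in the closed convex hull of 𝒜 and approximate it by convex combinations of at most
`dim + 1` points `(g(x_d), f(x_d))` plus slack, with weights `w_d` (Carathéodory). In the variables
`t_d = √w_d`, `u_d = t_d x_d` every average `∑ w_d q(x_d)` of a quadratic `q` becomes
`∑ q̃(t_d, u_d)`, where `q̃(t, u)` is the degree-two homogenization of `q`, a continuous function.
Since each constraint of (P_M) enters (P_D) with both signs, the averaged squared residual
`∑ w_d ‖a x_d - b‖²` and the averaged binary defects tend to zero. The cone condition together
with (RA) makes `f + M ‖a x - b‖²` coercive on ℝⁿ₊, so the `u_d` stay bounded and a subsequence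
converges to some `(t_d, u_d)` with `a u_d = t_d b`, `∑ t_d² = 1` and `∑ f̃(t_d, u_d) ≤ r`.
Atoms with `t_d = 0` contribute `u_dᵀ A u_d ≥ 0`; for `t_d > 0`, (RA) forces `u_d / t_d` to be
binary on `B`, so one of these points is feasible for (P_M) with objective value at most `r`.
-/

open Pointwise Matrix Filter Topology

theorem exists_fin_sum_smul_eq_of_mem_convexHull {E : Type*} [AddCommGroup E] [Module ℝ E]
    [FiniteDimensional ℝ E] {S : Set E} {z : E} (hz : z ∈ convexHull ℝ S) :
    ∃ (w : Fin (Module.finrank ℝ E + 1) → ℝ) (y : Fin (Module.finrank ℝ E + 1) → E),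
      (∀ d, 0 ≤ w d) ∧ ∑ d, w d = 1 ∧ (∀ d, y d ∈ S) ∧ ∑ d, w d • y d = z := by
  obtain ⟨ι, _, y, w, hyS, hai, hw, hw1, hwy⟩ := eq_pos_convex_span_of_mem_convexHull hz
  obtain ⟨y₀, hy₀⟩ := convexHull_nonempty_iff.1 ⟨z, hz⟩
  have hcard : Fintype.card ι ≤ Fintype.card (Fin (Module.finrank ℝ E + 1)) := by
    simpa using hai.card_le_finrank_succ.trans (Nat.succ_le_succ (Submodule.finrank_le _))
  obtain ⟨e⟩ := Function.Embedding.nonempty_of_card_le hcard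
  set w' := Function.extend e w 0
  set y' := Function.extend e y fun _ => y₀
  have hw' (i : ι) : w' (e i) = w i := e.injective.extend_apply _ _ _
  have hy' (i : ι) : y' (e i) = y i := e.injective.extend_apply _ _ _
  have hw'_off (d) (hd : d ∉ Set.range e) : w' d = 0 := Function.extend_apply' _ _ _ hd
  refine ⟨w', y', fun d => ?_, ?_, fun d => ?_, ?_⟩
  · by_cases hd : d ∈ Set.range e
    · obtain ⟨i, rfl⟩ := hd
      exact hw' i ▸ (hw i).le
    · exact (hw'_off d hd).ge
  · rw [← hw1]
    exact (Fintype.sum_of_injective e e.injective _ _ hw'_off fun i => (hw' i).symm).symm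
  · by_cases hd : d ∈ Set.range e
    · obtain ⟨i, rfl⟩ := hd
      exact hy' i ▸ hyS ⟨i, rfl⟩
    · rw [show y' d = y₀ from Function.extend_apply' _ _ _ hd]
      exact hy₀
  · rw [← hwy]
    refine (Fintype.sum_of_injective e e.injective _ _ (fun d hd => ?_) fun i => ?_).symm
    · rw [hw'_off d hd, zero_smul]
    · rw [hw', hy']

theorem exists_fin_sum_smul_le_of_mem_convexHull_add_Ici {α E : Type*} [AddCommGroup E]
    [Module ℝ E] [FiniteDimensional ℝ E] [PartialOrder E] [IsOrderedAddMonoid E]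
    [PosSMulMono ℝ E] {Ψ : α → E} {X : Set α} {z : E}
    (hz : z ∈ convexHull ℝ (Ψ '' X + Set.Ici 0)) :
    ∃ (w : Fin (Module.finrank ℝ E + 1) → ℝ) (x : Fin (Module.finrank ℝ E + 1) → α),
      (∀ d, 0 ≤ w d) ∧ ∑ d, w d = 1 ∧ (∀ d, x d ∈ X) ∧ ∑ d, w d • Ψ (x d) ≤ z := by
  obtain ⟨w, y, hw, hw1, hy, rfl⟩ := exists_fin_sum_smul_eq_of_mem_convexHull hz
  have hdecomp (d) : ∃ a ∈ X, Ψ a ≤ y d := by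
    obtain ⟨_, ⟨a, ha, rfl⟩, q, hq, hyd⟩ := Set.mem_add.1 (hy d)
    exact ⟨a, ha, hyd ▸ le_add_of_nonneg_right hq⟩
  choose x hx hxy using hdecomp
  exact ⟨w, x, hw, hw1, hx, Finset.sum_le_sum fun d _ => smul_le_smul_of_nonneg_left (hxy d) (hw d)⟩

theorem exists_seq_sum_smul_le_of_mem_closure_convexHull {α E : Type*} [NormedAddCommGroup E]
    [NormedSpace ℝ E] [FiniteDimensional ℝ E] [PartialOrder E] [IsOrderedAddMonoid E]
    [PosSMulMono ℝ E] {Ψ : α → E} {X : Set α} {p : E}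
    (hp : p ∈ closure (convexHull ℝ (Ψ '' X + Set.Ici 0))) :
    ∃ (z : ℕ → E) (w : ℕ → Fin (Module.finrank ℝ E + 1) → ℝ)
      (x : ℕ → Fin (Module.finrank ℝ E + 1) → α), Tendsto z atTop (𝓝 p) ∧
      (∀ k d, 0 ≤ w k d) ∧ (∀ k, ∑ d, w k d = 1) ∧ (∀ k d, x k d ∈ X) ∧
      ∀ k, ∑ d, w k d • Ψ (x k d) ≤ z k := by
  obtain ⟨z, hzS, hz⟩ := mem_closure_iff_seq_limit.1 hp
  choose w x hw hw1 hx hle using fun k => exists_fin_sum_smul_le_of_mem_convexHull_add_Ici (hzS k)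
  exact ⟨z, w, x, hz, hw, hw1, hx, hle⟩

theorem tendsto_sum_mul_of_opposite {α X κ ι : Type*} [Fintype ι] {l : Filter α}
    {G : κ → X → ℝ} {h : X → ℝ} (hpair : ∃ j₁ j₂, ∀ x, G j₁ x = h x ∧ G j₂ x = -h x)
    {w : α → ι → ℝ} {x : α → ι → X} {z : α → κ → ℝ} (hz : Tendsto z l (𝓝 0))
    (hle : ∀ k j, ∑ d, w k d * G j (x k d) ≤ z k j) :
    Tendsto (fun k => ∑ d, w k d * h (x k d)) l (𝓝 0) := by
  obtain ⟨j₁, j₂, hG⟩ := hpair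
  have hz' (j) : Tendsto (fun k => z k j) l (𝓝 0) := tendsto_pi_nhds.1 hz j
  refine tendsto_of_tendsto_of_tendsto_of_le_of_le (by simpa using (hz' j₂).neg) (hz' j₁)
    (fun k => ?_) (fun k => by simpa only [hG] using hle k j₁)
  have := hle k j₂
  simp only [hG, mul_neg, Finset.sum_neg_distrib] at this
  exact neg_le.1 this

theorem abs_dotProduct_le {n : Type*} [Fintype n] (v x : n → ℝ) :
    |v ⬝ᵥ x| ≤ (∑ i, |v i|) * ‖x‖ := by
  rw [Finset.sum_mul]
  refine (Finset.abs_sum_le_sum_abs _ _).trans (Finset.sum_le_sum fun i _ => ?_)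
  rw [abs_mul, ← Real.norm_eq_abs (x i)]
  exact mul_le_mul_of_nonneg_left (norm_le_pi_norm x i) (abs_nonneg _)

theorem exists_mul_norm_sq_le_add_mul {E : Type*} [NormedAddCommGroup E] [NormedSpace ℝ E]
    [FiniteDimensional ℝ E] {C : Set E} (hC : IsClosed C)
    (hCsmul : ∀ t : ℝ, 0 < t → ∀ u ∈ C, t • u ∈ C) {Q P : E → ℝ}
    (hQ : Continuous Q) (hP : Continuous P) (hQsmul : ∀ (t : ℝ) u, Q (t • u) = t ^ 2 * Q u)
    (hPsmul : ∀ (t : ℝ) u, P (t • u) = t ^ 2 * P u) (hP0 : ∀ u, 0 ≤ P u)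
    (hQP : ∀ u ∈ C, Q u ≤ 0 → P u = 0 → u = 0) :
    ∃ ε > 0, ∃ M ≥ 0, ∀ u ∈ C, ε * ‖u‖ ^ 2 ≤ Q u + M * P u := by
  set K := C ∩ Metric.sphere 0 1
  have hK : IsCompact K := (isCompact_sphere 0 1).inter_left hC
  obtain ⟨M, hM⟩ : ∃ M : ℕ, ∀ v ∈ K, 0 < Q v + M * P v := by
    by_contra! h
    set V : ℕ → Set E := fun M => {v ∈ K | Q v + M * P v ≤ 0}
    have hVanti (M : ℕ) : V (M + 1) ⊆ V M := fun v hv => ⟨hv.1, by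
      have := hP0 v; have := hv.2; push_cast at this; nlinarith⟩
    have hVclosed (M : ℕ) : IsClosed (V M) :=
      hK.isClosed.inter (isClosed_le (hQ.add (continuous_const.mul hP)) continuous_const)
    obtain ⟨v, hv⟩ := IsCompact.nonempty_iInter_of_sequence_nonempty_isCompact_isClosed V hVanti
      h (hK.of_isClosed_subset (hVclosed 0) fun v hv => hv.1) hVclosed
    have hvK : ∀ M : ℕ, v ∈ K ∧ Q v + M * P v ≤ 0 := Set.mem_iInter.1 hv
    have hPv : P v = 0 := by
      by_contra hPv
      obtain ⟨M, hM⟩ := exists_nat_gt (-Q v / P v)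
      rw [div_lt_iff₀ ((hP0 v).lt_of_ne' hPv)] at hM
      linarith [(hvK M).2]
    have hQv : Q v ≤ 0 := by simpa using (hvK 0).2
    have hv1 : ‖v‖ = 1 := mem_sphere_zero_iff_norm.1 (hvK 0).1.2
    rw [hQP v (hvK 0).1.1 hQv hPv, norm_zero] at hv1
    exact zero_ne_one hv1
  obtain ⟨ε, hε, hεK⟩ := hK.exists_forall_le'
    (by fun_prop : Continuous fun v => Q v + M * P v).continuousOn hM
  refine ⟨ε, hε, M, M.cast_nonneg, fun u hu => ?_⟩
  rcases eq_or_ne u 0 with rfl | hu0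
  · simp [show Q 0 = 0 by simpa using hQsmul 0 0, show P 0 = 0 by simpa using hPsmul 0 0]
  have hn : 0 < ‖u‖ := norm_pos_iff.2 hu0
  have hεu := hεK (‖u‖⁻¹ • u) ⟨hCsmul _ (inv_pos.2 hn) u hu, by simp [norm_smul, hn.ne']⟩
  rw [hQsmul, hPsmul] at hεu
  calc ε * ‖u‖ ^ 2 ≤ (‖u‖⁻¹ ^ 2 * Q u + M * (‖u‖⁻¹ ^ 2 * P u)) * ‖u‖ ^ 2 := by gcongr
    _ = Q u + M * P u := by field_simp

theorem tendsto_sum_mul_of_tendsto_sqrt_smul {α E ι : Type*} [TopologicalSpace E] [SMul ℝ E]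
    [Fintype ι] {l : Filter α} {F : ℝ × E → ℝ} {ψ : E → ℝ} (hF : Continuous F)
    (hFψ : ∀ (t : ℝ) x, F (t, t • x) = t ^ 2 * ψ x) {w : α → ι → ℝ} (hw : ∀ k d, 0 ≤ w k d)
    {x : α → ι → E} {t : ι → ℝ} {u : ι → E}
    (ht : Tendsto (fun k d => √(w k d)) l (𝓝 t))
    (hu : Tendsto (fun k d => √(w k d) • x k d) l (𝓝 u)) :
    Tendsto (fun k => ∑ d, w k d * ψ (x k d)) l (𝓝 (∑ d, F (t d, u d))) := by
  have hterm (k d) : w k d * ψ (x k d) = F (√(w k d), √(w k d) • x k d) := by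
    rw [hFψ, Real.sq_sqrt (hw k d)]
  simp only [hterm]
  exact tendsto_finsetSum _ fun d _ =>
    (hF.tendsto _).comp ((tendsto_pi_nhds.1 ht d).prodMk_nhds (tendsto_pi_nhds.1 hu d))

theorem exists_subseq_tendsto_sqrt_smul {E ι : Type*} [NormedAddCommGroup E]
    [NormedSpace ℝ E] [ProperSpace E] [Fintype ι] {w : ℕ → ι → ℝ} {x : ℕ → ι → E}
    (hw : ∀ k d, 0 ≤ w k d) (hw1 : ∀ k, ∑ d, w k d = 1) {R : ℝ}
    (hR : ∀ᶠ k in atTop, ∑ d, w k d * ‖x k d‖ ^ 2 ≤ R) :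
    ∃ (t : ι → ℝ) (u : ι → E) (φ : ℕ → ℕ), StrictMono φ ∧
      Tendsto (fun k d => √(w (φ k) d)) atTop (𝓝 t) ∧
      Tendsto (fun k d => √(w (φ k) d) • x (φ k) d) atTop (𝓝 u) := by
  have hbdd : ∀ᶠ k in atTop, ((fun d => √(w k d)), fun d => √(w k d) • x k d) ∈
      Metric.closedBall (0 : (ι → ℝ) × (ι → E)) (max 1 √R) := by
    filter_upwards [hR] with k hk
    have hwk (d) : w k d * ‖x k d‖ ^ 2 ≤ R :=
      (Finset.single_le_sum (fun d _ => by have := hw k d; positivity) (Finset.mem_univ d)).trans hk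
    rw [mem_closedBall_zero_iff, Prod.norm_def, max_le_iff]
    constructor
    · refine (pi_norm_le_iff_of_nonneg (by positivity)).2 fun d => (le_max_left _ _).trans' ?_
      rw [Real.norm_of_nonneg (Real.sqrt_nonneg _), Real.sqrt_le_one]
      exact (Finset.single_le_sum (fun d _ => hw k d) (Finset.mem_univ d)).trans (hw1 k).le
    · refine (pi_norm_le_iff_of_nonneg (by positivity)).2 fun d => (le_max_right _ _).trans' ?_
      rw [norm_smul, Real.norm_of_nonneg (Real.sqrt_nonneg _)]
      refine Real.le_sqrt_of_sq_le ?_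
      rw [mul_pow, Real.sq_sqrt (hw k d)]
      exact hwk d
  obtain ⟨⟨t, u⟩, -, φ, hφ, hlim⟩ :=
    tendsto_subseq_of_frequently_bounded Metric.isBounded_closedBall hbdd.frequently
  exact ⟨t, u, φ, hφ, (continuous_fst.tendsto _).comp hlim, (continuous_snd.tendsto _).comp hlim⟩

theorem exists_pos_and_le_of_sum_le {ι : Type*} [Fintype ι] {t F φ : ι → ℝ} {r : ℝ}
    (ht : ∀ d, 0 ≤ t d) (ht1 : ∑ d, t d ^ 2 = 1) (hF0 : ∀ d, t d = 0 → 0 ≤ F d)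
    (hFφ : ∀ d, 0 < t d → F d = t d ^ 2 * φ d) (hF : ∑ d, F d ≤ r) :
    ∃ d, 0 < t d ∧ φ d ≤ r := by
  by_contra! hgt
  -- otherwise every term satisfies `t d ^ 2 * r ≤ F d`, strictly where `t d ≠ 0`
  have hle (d) : t d ^ 2 * r ≤ F d := by
    rcases (ht d).eq_or_lt with hd | hd
    · simpa [← hd] using hF0 d hd.symm
    · exact (hFφ d hd).symm ▸ mul_le_mul_of_nonneg_left (hgt d hd).le (sq_nonneg _)
  obtain ⟨d₀, -, hd₀⟩ := Finset.exists_ne_zero_of_sum_ne_zero (ht1.trans_ne one_ne_zero)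
  have hd₀pos : 0 < t d₀ := (ht d₀).lt_of_ne' (pow_ne_zero_iff two_ne_zero |>.1 hd₀)
  have hlt := Finset.sum_lt_sum (fun d _ => hle d) ⟨d₀, Finset.mem_univ _,
    (hFφ d₀ hd₀pos).symm ▸ mul_lt_mul_of_pos_left (hgt d₀ hd₀pos) (by positivity)⟩
  rw [← Finset.sum_mul, ht1, one_mul] at hlt
  linarith

section MixedIntegerQP

variable {n m s : ℕ} (A : Matrix (Fin n) (Fin n) ℝ) (b : Fin n → ℝ) (c : ℝ)
  (aa : Fin m → Fin n → ℝ) (bb : Fin m → ℝ) (hsn : s ≤ n)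

-- The constraints `g_j` of (P_D), block by block; the guards `j - k m < m` and `j - 4 m < s`
-- double as the bounds of the indices.
def constraintPD (j : Fin (4 * m + 2 * s)) (x : Fin n → ℝ) : ℝ :=
  if h1 : j.1 < m then aa ⟨j.1, h1⟩ ⬝ᵥ x - bb ⟨j.1, h1⟩
  else if h2 : j.1 - m < m then -(aa ⟨j.1 - m, h2⟩ ⬝ᵥ x - bb ⟨j.1 - m, h2⟩)
  else if h3 : j.1 - 2 * m < m then (aa ⟨j.1 - 2 * m, h3⟩ ⬝ᵥ x) ^ 2 - bb ⟨j.1 - 2 * m, h3⟩ ^ 2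
  else if h4 : j.1 - 3 * m < m then
    -((aa ⟨j.1 - 3 * m, h4⟩ ⬝ᵥ x) ^ 2 - bb ⟨j.1 - 3 * m, h4⟩ ^ 2)
  else if h5 : j.1 - 4 * m < s then
    x (Fin.castLE hsn ⟨j.1 - 4 * m, h5⟩) * (x (Fin.castLE hsn ⟨j.1 - 4 * m, h5⟩) - 1)
  else
    -(x (Fin.castLE hsn ⟨j.1 - 4 * m - s, by omega⟩) *
      (x (Fin.castLE hsn ⟨j.1 - 4 * m - s, by omega⟩) - 1))

def RegularityAssumption : Prop :=
  ∀ d : Fin n → ℝ, (∀ j, 0 ≤ d j) → (∀ j : Fin m, aa j ⬝ᵥ d = bb j) →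
    ∀ i : Fin s, 0 ≤ d (Fin.castLE hsn i) ∧ d (Fin.castLE hsn i) ≤ 1

def IsRecessionDirection (u : Fin n → ℝ) : Prop :=
  (∀ i, 0 ≤ u i) ∧ ∀ j : Fin m, aa j ⬝ᵥ u = 0

def sqResidual (x : Fin n → ℝ) : ℝ := ∑ j, (aa j ⬝ᵥ x - bb j) ^ 2

def homObjective (p : ℝ × (Fin n → ℝ)) : ℝ :=
  p.2 ⬝ᵥ A *ᵥ p.2 + p.1 * (b ⬝ᵥ p.2) + p.1 ^ 2 * c

def homResidual (p : ℝ × (Fin n → ℝ)) : ℝ := ∑ j, (aa j ⬝ᵥ p.2 - p.1 * bb j) ^ 2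

theorem homObjective_smul (t : ℝ) (x : Fin n → ℝ) :
    homObjective A b c (t, t • x) = t ^ 2 * (x ⬝ᵥ A *ᵥ x + b ⬝ᵥ x + c) := by
  simp only [homObjective, mulVec_smul, dotProduct_smul, smul_dotProduct, smul_eq_mul]
  ring

theorem homResidual_smul (t : ℝ) (x : Fin n → ℝ) :
    homResidual aa bb (t, t • x) = t ^ 2 * sqResidual aa bb x := by
  simp only [homResidual, sqResidual, dotProduct_smul, smul_eq_mul, Finset.mul_sum]
  exact Finset.sum_congr rfl fun j _ => by ring

theorem continuous_homObjective : Continuous (homObjective A b c) := by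
  unfold homObjective; fun_prop

theorem continuous_homResidual : Continuous (homResidual aa bb) := by
  unfold homResidual; fun_prop

theorem constraintPD_eq_zero {x : Fin n → ℝ} (hlin : ∀ j, aa j ⬝ᵥ x = bb j)
    (hbin : ∀ i : Fin s, x (Fin.castLE hsn i) = 0 ∨ x (Fin.castLE hsn i) = 1)
    (j : Fin (4 * m + 2 * s)) : constraintPD aa bb hsn j x = 0 := by
  have hbin' (i : Fin s) : x (Fin.castLE hsn i) * (x (Fin.castLE hsn i) - 1) = 0 := by
    rcases hbin i with h | h <;> simp [h]
  unfold constraintPD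
  split_ifs <;> simp only [hlin, hbin', sub_self, neg_zero]

theorem exists_constraintPD_pair_lin (j : Fin m) : ∃ j₁ j₂, ∀ x,
    constraintPD aa bb hsn j₁ x = aa j ⬝ᵥ x - bb j ∧
      constraintPD aa bb hsn j₂ x = -(aa j ⬝ᵥ x - bb j) := by
  refine ⟨⟨j, by omega⟩, ⟨m + j, by omega⟩, fun x => ⟨?_, ?_⟩⟩ <;>
    simp only [constraintPD] <;> split_ifs <;> first | omega | simp only [Nat.add_sub_cancel_left]

theorem exists_constraintPD_pair_sq (j : Fin m) : ∃ j₁ j₂, ∀ x,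
    constraintPD aa bb hsn j₁ x = (aa j ⬝ᵥ x) ^ 2 - bb j ^ 2 ∧
      constraintPD aa bb hsn j₂ x = -((aa j ⬝ᵥ x) ^ 2 - bb j ^ 2) := by
  refine ⟨⟨2 * m + j, by omega⟩, ⟨3 * m + j, by omega⟩, fun x => ⟨?_, ?_⟩⟩ <;>
    simp only [constraintPD] <;> split_ifs <;> first | omega | simp only [Nat.add_sub_cancel_left]

theorem exists_constraintPD_pair_binary (i : Fin s) : ∃ j₁ j₂, ∀ x,
    constraintPD aa bb hsn j₁ x = x (Fin.castLE hsn i) * (x (Fin.castLE hsn i) - 1) ∧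
      constraintPD aa bb hsn j₂ x = -(x (Fin.castLE hsn i) * (x (Fin.castLE hsn i) - 1)) := by
  refine ⟨⟨4 * m + i, by omega⟩, ⟨4 * m + (s + i), by omega⟩, fun x => ⟨?_, ?_⟩⟩ <;>
    simp only [constraintPD] <;> split_ifs <;> first | omega | simp only [Nat.add_sub_cancel_left]

variable {A b c aa bb hsn}

theorem IsRecessionDirection.apply_castLE_eq_zero (hRA : RegularityAssumption aa bb hsn)
    {x₀ : Fin n → ℝ} (hx₀ : ∀ i, 0 ≤ x₀ i) (hx₀lin : ∀ j, aa j ⬝ᵥ x₀ = bb j)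
    {u : Fin n → ℝ} (hu : IsRecessionDirection aa u) (i : Fin s) : u (Fin.castLE hsn i) = 0 := by
  refine le_antisymm ?_ (hu.1 _)
  by_contra! hui
  have hray := (hRA (x₀ + (2 / u (Fin.castLE hsn i)) • u)
    (fun j => add_nonneg (hx₀ j) (mul_nonneg (div_pos two_pos hui).le (hu.1 j)))
    (fun j => by rw [dotProduct_add, dotProduct_smul, hu.2, hx₀lin, smul_zero, add_zero]) i).2
  rw [Pi.add_apply, Pi.smul_apply, smul_eq_mul, div_mul_cancel₀ _ hui.ne'] at hray
  linarith [hx₀ (Fin.castLE hsn i)]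

theorem mul_sub_nonpos_of_forall_dotProduct_eq (hRA : RegularityAssumption aa bb hsn)
    (hrec : ∀ u, IsRecessionDirection aa u → ∀ i : Fin s, u (Fin.castLE hsn i) = 0)
    {t : ℝ} (ht : 0 ≤ t) {u : Fin n → ℝ} (hu : ∀ i, 0 ≤ u i) (hlin : ∀ j, aa j ⬝ᵥ u = t * bb j)
    (i : Fin s) : u (Fin.castLE hsn i) * (u (Fin.castLE hsn i) - t) ≤ 0 := by
  rcases ht.eq_or_lt with rfl | ht
  · simp [hrec u ⟨hu, by simpa using hlin⟩ i]
  have hx := hRA (t⁻¹ • u) (fun j => smul_nonneg (inv_nonneg.2 ht.le) (hu j))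
    (fun j => by rw [dotProduct_smul, hlin, smul_eq_mul, inv_mul_cancel_left₀ ht.ne']) i
  simp only [Pi.smul_apply, smul_eq_mul, inv_mul_le_one₀ ht] at hx
  exact mul_nonpos_of_nonneg_of_nonpos (hu _) (by linarith [hx.2])

theorem tendsto_sum_mul_sqResidual {α ι : Type*} [Fintype ι] {l : Filter α} {w : α → ι → ℝ}
    {x : α → ι → Fin n → ℝ}
    (hlin : ∀ j, Tendsto (fun k => ∑ d, w k d * (aa j ⬝ᵥ x k d - bb j)) l (𝓝 0))
    (hsq : ∀ j, Tendsto (fun k => ∑ d, w k d * ((aa j ⬝ᵥ x k d) ^ 2 - bb j ^ 2)) l (𝓝 0)) :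
    Tendsto (fun k => ∑ d, w k d * sqResidual aa bb (x k d)) l (𝓝 0) := by
  -- `(a x - b)² = ((a x)² - b²) - 2 b (a x - b)`
  have hsplit (k) : ∑ d, w k d * sqResidual aa bb (x k d) = ∑ j, (∑ d, w k d *
      ((aa j ⬝ᵥ x k d) ^ 2 - bb j ^ 2) - 2 * bb j * ∑ d, w k d * (aa j ⬝ᵥ x k d - bb j)) := by
    simp only [sqResidual, Finset.mul_sum]
    rw [Finset.sum_comm]
    refine Finset.sum_congr rfl fun j _ => ?_
    rw [← Finset.sum_sub_distrib]
    exact Finset.sum_congr rfl fun d _ => by ring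
  simp only [hsplit]
  simpa using tendsto_finsetSum _ fun j _ => (hsq j).sub ((hlin j).const_mul (2 * bb j))

theorem exists_mul_norm_sq_le_objective
    (hpos : ∀ u, IsRecessionDirection aa u → u ⬝ᵥ A *ᵥ u ≤ 0 → u = 0) :
    ∃ ε > 0, ∃ M K : ℝ, ∀ x : Fin n → ℝ, (∀ i, 0 ≤ x i) →
      ε * ‖x‖ ^ 2 ≤ x ⬝ᵥ A *ᵥ x + b ⬝ᵥ x + c + M * sqResidual aa bb x + K := by
  obtain ⟨ε, hε, M, hM, hcoer⟩ := exists_mul_norm_sq_le_add_mul (C := Set.Ici 0)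
    isClosed_Ici (fun t ht u hu => smul_nonneg ht.le hu) (Q := fun x => x ⬝ᵥ A *ᵥ x)
    (P := fun x => ∑ j, (aa j ⬝ᵥ x) ^ 2) (by fun_prop) (by fun_prop)
    (fun t u => by simp only [mulVec_smul, dotProduct_smul, smul_dotProduct, smul_eq_mul]; ring)
    (fun t u => by simp only [dotProduct_smul, smul_eq_mul, Finset.mul_sum]; ring_nf)
    (fun u => Finset.sum_nonneg fun j _ => sq_nonneg _)
    (fun u hu hQ hP => hpos u ⟨hu, fun j => by
      simpa using (Finset.sum_eq_zero_iff_of_nonneg fun j _ => sq_nonneg _).1 hP j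
        (Finset.mem_univ j)⟩ hQ)
  set β := ∑ i, |b i|
  refine ⟨ε / 2, by positivity, 2 * M, 2 * M * ∑ j, bb j ^ 2 + β ^ 2 / (2 * ε) - c,
    fun x hx => ?_⟩
  have hP : ∑ j, (aa j ⬝ᵥ x) ^ 2 ≤ 2 * sqResidual aa bb x + 2 * ∑ j, bb j ^ 2 := by
    simp only [sqResidual, Finset.mul_sum, ← Finset.sum_add_distrib]
    exact Finset.sum_le_sum fun j _ => by nlinarith [sq_nonneg (aa j ⬝ᵥ x - 2 * bb j)]
  have hlinear : -(β * ‖x‖) ≤ b ⬝ᵥ x := neg_le_of_abs_le (abs_dotProduct_le b x)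
  have hamgm : β * ‖x‖ ≤ ε / 2 * ‖x‖ ^ 2 + β ^ 2 / (2 * ε) := by
    have hsq : ε / 2 * ‖x‖ ^ 2 + β ^ 2 / (2 * ε) - β * ‖x‖ = (ε * ‖x‖ - β) ^ 2 / (2 * ε) := by
      field_simp; ring
    linarith [div_nonneg (sq_nonneg (ε * ‖x‖ - β)) (by positivity : (0 : ℝ) ≤ 2 * ε)]
  nlinarith [hcoer x hx, mul_le_mul_of_nonneg_left hP hM]

theorem eventually_sum_mul_norm_sq_le
    (hpos : ∀ u, IsRecessionDirection aa u → u ⬝ᵥ A *ᵥ u ≤ 0 → u = 0)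
    {ι : Type*} [Fintype ι] {w : ℕ → ι → ℝ} {x : ℕ → ι → Fin n → ℝ}
    (hw : ∀ k d, 0 ≤ w k d) (hw1 : ∀ k, ∑ d, w k d = 1) (hx : ∀ k d i, 0 ≤ x k d i)
    (hres : Tendsto (fun k => ∑ d, w k d * sqResidual aa bb (x k d)) atTop (𝓝 0))
    {y : ℕ → ℝ} {r : ℝ} (hy : Tendsto y atTop (𝓝 r))
    (hobj : ∀ k, ∑ d, w k d * (x k d ⬝ᵥ A *ᵥ x k d + b ⬝ᵥ x k d + c) ≤ y k) :
    ∃ R, ∀ᶠ k in atTop, ∑ d, w k d * ‖x k d‖ ^ 2 ≤ R := by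
  obtain ⟨ε, hε, M, K, hgrowth⟩ := exists_mul_norm_sq_le_objective (b := b) (c := c) hpos
  have hbound (k) : ε * ∑ d, w k d * ‖x k d‖ ^ 2 ≤
      y k + M * ∑ d, w k d * sqResidual aa bb (x k d) + K := by
    calc ε * ∑ d, w k d * ‖x k d‖ ^ 2 = ∑ d, w k d * (ε * ‖x k d‖ ^ 2) := by
          rw [Finset.mul_sum]; exact Finset.sum_congr rfl fun d _ => by ring
      _ ≤ ∑ d, w k d * (x k d ⬝ᵥ A *ᵥ x k d + b ⬝ᵥ x k d + c
          + M * sqResidual aa bb (x k d) + K) :=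
        Finset.sum_le_sum fun d _ => mul_le_mul_of_nonneg_left (hgrowth _ (hx k d)) (hw k d)
      _ = ∑ d, w k d * (x k d ⬝ᵥ A *ᵥ x k d + b ⬝ᵥ x k d + c)
          + M * ∑ d, w k d * sqResidual aa bb (x k d) + K := by
        simp only [mul_add, Finset.sum_add_distrib, ← Finset.sum_mul, hw1, one_mul, Finset.mul_sum,
          mul_left_comm M]
      _ ≤ y k + M * ∑ d, w k d * sqResidual aa bb (x k d) + K := by linarith [hobj k]
  have hlim := (hy.add (hres.const_mul M)).add_const K
  rw [mul_zero, add_zero] at hlim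
  refine ⟨(r + K + 1) / ε, ?_⟩
  filter_upwards [hlim.eventually (gt_mem_nhds (lt_add_one (r + K)))] with k hk
  rw [le_div_iff₀' hε]
  linarith [hbound k]

theorem exists_feasible_le_of_homogenized (hRA : RegularityAssumption aa bb hsn)
    (hrec : ∀ u, IsRecessionDirection aa u → ∀ i : Fin s, u (Fin.castLE hsn i) = 0)
    (hpos : ∀ u, IsRecessionDirection aa u → u ⬝ᵥ A *ᵥ u ≤ 0 → u = 0)
    {ι : Type*} [Fintype ι] {t : ι → ℝ} {u : ι → Fin n → ℝ} (ht : ∀ d, 0 ≤ t d)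
    (ht1 : ∑ d, t d ^ 2 = 1) (hu : ∀ d i, 0 ≤ u d i)
    (hres : ∑ d, homResidual aa bb (t d, u d) = 0)
    (hbin : ∀ i : Fin s, ∑ d, u d (Fin.castLE hsn i) * (u d (Fin.castLE hsn i) - t d) = 0)
    {r : ℝ} (hobj : ∑ d, homObjective A b c (t d, u d) ≤ r) :
    ∃ x : Fin n → ℝ, (∀ i, 0 ≤ x i) ∧ (∀ j, aa j ⬝ᵥ x = bb j) ∧
      (∀ i : Fin s, x (Fin.castLE hsn i) = 0 ∨ x (Fin.castLE hsn i) = 1) ∧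
      x ⬝ᵥ A *ᵥ x + b ⬝ᵥ x + c ≤ r := by
  have hlin (d j) : aa j ⬝ᵥ u d = t d * bb j := by
    have hd := (Finset.sum_eq_zero_iff_of_nonneg fun d _ =>
      Finset.sum_nonneg fun j _ => sq_nonneg _).1 hres d (Finset.mem_univ d)
    have hdj := (Finset.sum_eq_zero_iff_of_nonneg fun j _ => sq_nonneg _).1 hd j
      (Finset.mem_univ j)
    exact sub_eq_zero.1 (pow_eq_zero_iff two_ne_zero |>.1 hdj)
  have hterm (i d) : u d (Fin.castLE hsn i) * (u d (Fin.castLE hsn i) - t d) = 0 :=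
    (Finset.sum_eq_zero_iff_of_nonpos fun d _ => mul_sub_nonpos_of_forall_dotProduct_eq hRA hrec
      (ht d) (hu d) (hlin d) i).1 (hbin i) d (Finset.mem_univ d)
  obtain ⟨d, htd, hfd⟩ := exists_pos_and_le_of_sum_le ht ht1
    (F := fun d => homObjective A b c (t d, u d))
    (φ := fun d => (t d)⁻¹ • u d ⬝ᵥ A *ᵥ ((t d)⁻¹ • u d) + b ⬝ᵥ (t d)⁻¹ • u d + c)
    (fun d hd => by
      by_contra! hneg
      have hu0 := hpos (u d) ⟨hu d, fun j => by rw [hlin, hd, zero_mul]⟩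
        (by simpa [homObjective, hd] using hneg.le)
      simp [homObjective, hu0, hd] at hneg)
    (fun d hd => by rw [← homObjective_smul, smul_inv_smul₀ hd.ne']) hobj
  refine ⟨(t d)⁻¹ • u d, fun i => smul_nonneg (inv_nonneg.2 htd.le) (hu d i),
    fun j => by rw [dotProduct_smul, hlin, smul_eq_mul, inv_mul_cancel_left₀ htd.ne'],
    fun i => ?_, hfd⟩
  simp only [Pi.smul_apply, smul_eq_mul, mul_eq_zero, inv_eq_zero, inv_mul_eq_one₀ htd.ne']
  rcases mul_eq_zero.1 (hterm i d) with h | h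
  · exact Or.inl (Or.inr h)
  · exact Or.inr (sub_eq_zero.1 h).symm

theorem exists_feasible_le_of_tendsto (hRA : RegularityAssumption aa bb hsn)
    (hrec : ∀ u, IsRecessionDirection aa u → ∀ i : Fin s, u (Fin.castLE hsn i) = 0)
    (hpos : ∀ u, IsRecessionDirection aa u → u ⬝ᵥ A *ᵥ u ≤ 0 → u = 0)
    {ι : Type*} [Fintype ι] {w : ℕ → ι → ℝ} {x : ℕ → ι → Fin n → ℝ}
    (hw : ∀ k d, 0 ≤ w k d) (hw1 : ∀ k, ∑ d, w k d = 1) (hx : ∀ k d i, 0 ≤ x k d i)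
    (hres : Tendsto (fun k => ∑ d, w k d * sqResidual aa bb (x k d)) atTop (𝓝 0))
    (hbin : ∀ i : Fin s, Tendsto (fun k => ∑ d, w k d *
      (x k d (Fin.castLE hsn i) * (x k d (Fin.castLE hsn i) - 1))) atTop (𝓝 0))
    {y : ℕ → ℝ} {r : ℝ} (hy : Tendsto y atTop (𝓝 r))
    (hobj : ∀ k, ∑ d, w k d * (x k d ⬝ᵥ A *ᵥ x k d + b ⬝ᵥ x k d + c) ≤ y k) :
    ∃ x : Fin n → ℝ, (∀ i, 0 ≤ x i) ∧ (∀ j, aa j ⬝ᵥ x = bb j) ∧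
      (∀ i : Fin s, x (Fin.castLE hsn i) = 0 ∨ x (Fin.castLE hsn i) = 1) ∧
      x ⬝ᵥ A *ᵥ x + b ⬝ᵥ x + c ≤ r := by
  obtain ⟨R, hR⟩ := eventually_sum_mul_norm_sq_le hpos hw hw1 hx hres hy hobj
  obtain ⟨t, u, φ, hφ, ht, hu⟩ := exists_subseq_tendsto_sqrt_smul hw hw1 hR
  have hlim {F : ℝ × (Fin n → ℝ) → ℝ} {ψ : (Fin n → ℝ) → ℝ} (hF : Continuous F)
      (hFψ : ∀ (t : ℝ) x, F (t, t • x) = t ^ 2 * ψ x) :=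
    tendsto_sum_mul_of_tendsto_sqrt_smul hF hFψ (fun k => hw (φ k)) ht hu
  have hsub := hφ.tendsto_atTop
  have ht0 (d) : 0 ≤ t d := ge_of_tendsto' (tendsto_pi_nhds.1 ht d) fun k => Real.sqrt_nonneg _
  have ht1 : ∑ d, t d ^ 2 = 1 :=
    tendsto_nhds_unique (hlim (F := fun p => p.1 ^ 2) (ψ := fun _ => 1) (by fun_prop)
      fun t x => (mul_one _).symm) (by simp only [mul_one, hw1, tendsto_const_nhds])
  have hu0 (d i) : 0 ≤ u d i := ge_of_tendsto' (tendsto_pi_nhds.1 (tendsto_pi_nhds.1 hu d) i)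
    fun k => mul_nonneg (Real.sqrt_nonneg _) (hx _ d i)
  have hres0 : ∑ d, homResidual aa bb (t d, u d) = 0 := tendsto_nhds_unique
    (hlim (continuous_homResidual aa bb) (homResidual_smul aa bb)) (hres.comp hsub)
  have hbin0 (i : Fin s) :
      ∑ d, u d (Fin.castLE hsn i) * (u d (Fin.castLE hsn i) - t d) = 0 := by
    refine tendsto_nhds_unique (hlim (F := fun p => p.2 (Fin.castLE hsn i) *
      (p.2 (Fin.castLE hsn i) - p.1)) (ψ := fun x => x (Fin.castLE hsn i) *
      (x (Fin.castLE hsn i) - 1)) (by fun_prop) fun t x => ?_) ((hbin i).comp hsub)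
    simp only [Pi.smul_apply, smul_eq_mul]
    ring
  have hobj0 : ∑ d, homObjective A b c (t d, u d) ≤ r := le_of_tendsto_of_tendsto'
    (hlim (continuous_homObjective A b c) (homObjective_smul A b c)) (hy.comp hsub)
    fun k => hobj (φ k)
  exact exists_feasible_le_of_homogenized hRA hrec hpos ht0 ht1 hu0 hres0 hbin0 hobj0

end MixedIntegerQP

/-- Under the regularity assumption (RA) and the cone condition
{d ∈ ℝ^n_+ : dᵀAd ≤ 0, aⱼᵀd = 0 ∀j, dᵢ = 0 for 1 ≤ i ≤ s} = {0}, the continuous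
reformulation (P_D) of the mixed integer quadratic program (P_M) is convexifiable:
({0} × ℝ) ∩ cl conv 𝒜_{P_D} = ({0} × ℝ) ∩ 𝒜_{P_D}. -/
theorem stmt_7 (n m s : ℕ) (hsn : s ≤ n)
    (A : Matrix (Fin n) (Fin n) ℝ) (b : Fin n → ℝ) (c : ℝ)
    (aa : Fin m → Fin n → ℝ) (bb : Fin m → ℝ)
    (f : (Fin n → ℝ) → ℝ) (hf : ∀ x, f x = x ⬝ᵥ A *ᵥ x + b ⬝ᵥ x + c)
    (g : Fin (4 * m + 2 * s) → (Fin n → ℝ) → ℝ)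
    (hg : ∀ (j : Fin (4 * m + 2 * s)) (x : Fin n → ℝ),
      g j x =
        if h1 : j.1 < m then aa ⟨j.1, h1⟩ ⬝ᵥ x - bb ⟨j.1, h1⟩
        else if h2 : j.1 < 2 * m then -(aa ⟨j.1 - m, by omega⟩ ⬝ᵥ x) + bb ⟨j.1 - m, by omega⟩
        else if h3 : j.1 < 3 * m then
          (aa ⟨j.1 - 2 * m, by omega⟩ ⬝ᵥ x) ^ 2 - bb ⟨j.1 - 2 * m, by omega⟩ ^ 2
        else if h4 : j.1 < 4 * m then
          -(aa ⟨j.1 - 3 * m, by omega⟩ ⬝ᵥ x) ^ 2 + bb ⟨j.1 - 3 * m, by omega⟩ ^ 2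
        else if h5 : j.1 < 4 * m + s then
          x ⟨j.1 - 4 * m, by omega⟩ * (x ⟨j.1 - 4 * m, by omega⟩ - 1)
        else
          -(x ⟨j.1 - 4 * m - s, by have := j.isLt; omega⟩ *
            (x ⟨j.1 - 4 * m - s, by have := j.isLt; omega⟩ - 1)))
    (hfeas : ∃ x : Fin n → ℝ, (∀ j, 0 ≤ x j) ∧ (∀ j : Fin m, aa j ⬝ᵥ x = bb j) ∧
      ∀ i : Fin s, x (Fin.castLE hsn i) = 0 ∨ x (Fin.castLE hsn i) = 1)
    (hRA : ∀ d : Fin n → ℝ, (∀ j, 0 ≤ d j) → (∀ j : Fin m, aa j ⬝ᵥ d = bb j) →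
      ∀ i : Fin s, 0 ≤ d (Fin.castLE hsn i) ∧ d (Fin.castLE hsn i) ≤ 1)
    (hcone : {d : Fin n → ℝ | (∀ j, 0 ≤ d j) ∧ d ⬝ᵥ A *ᵥ d ≤ 0 ∧
        (∀ j : Fin m, aa j ⬝ᵥ d = 0) ∧ ∀ i : Fin s, d (Fin.castLE hsn i) = 0} = {0})
    (𝒜 : Set ((Fin (4 * m + 2 * s) → ℝ) × ℝ))
    (h𝒜 : 𝒜 = (fun x : Fin n → ℝ => ((fun j => g j x), f x)) '' {x | ∀ j, 0 ≤ x j}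
          + {q : (Fin (4 * m + 2 * s) → ℝ) × ℝ | (∀ j, 0 ≤ q.1 j) ∧ 0 ≤ q.2}) :
    {p : (Fin (4 * m + 2 * s) → ℝ) × ℝ | p.1 = 0} ∩ closure (convexHull ℝ 𝒜)
      = {p : (Fin (4 * m + 2 * s) → ℝ) × ℝ | p.1 = 0} ∩ 𝒜 := by
  obtain rfl : g = constraintPD aa bb hsn := funext fun j => funext fun x => by
    rw [hg, constraintPD]
    split_ifs <;> first | omega | rfl | ring
  obtain ⟨x₀, hx₀, hx₀lin, -⟩ := hfeas
  have hrec (u) (hu : IsRecessionDirection aa u) :=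
    hu.apply_castLE_eq_zero (hsn := hsn) hRA hx₀ hx₀lin
  have hpos (u) (hu : IsRecessionDirection aa u) (hA : u ⬝ᵥ A *ᵥ u ≤ 0) : u = 0 :=
    hcone.subset ⟨hu.1, hA, hu.2, hrec u hu⟩
  rw [show {q : (Fin (4 * m + 2 * s) → ℝ) × ℝ | (∀ j, 0 ≤ q.1 j) ∧ 0 ≤ q.2} = Set.Ici 0 from rfl]
    at h𝒜
  subst h𝒜
  refine Set.Subset.antisymm (fun p ⟨hp0, hp⟩ => ⟨hp0, ?_⟩)
    (Set.inter_subset_inter_right _ ((subset_convexHull ℝ _).trans subset_closure))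
  obtain ⟨z, w, x, hz, hw, hw1, hx, hle⟩ := exists_seq_sum_smul_le_of_mem_closure_convexHull hp
  have hle1 (k j) : ∑ d, w k d * constraintPD aa bb hsn j (x k d) ≤ (z k).1 j := by
    simpa [Prod.fst_sum, Finset.sum_apply] using (hle k).1 j
  have hz1 : Tendsto (fun k => (z k).1) atTop (𝓝 0) := hp0 ▸ (continuous_fst.tendsto p).comp hz
  obtain ⟨xs, hxs, hxslin, hxsbin, hxsf⟩ := exists_feasible_le_of_tendsto hRA hrec hpos hw hw1 hx
    (tendsto_sum_mul_sqResidual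
      (fun j => tendsto_sum_mul_of_opposite (exists_constraintPD_pair_lin aa bb hsn j) hz1 hle1)
      (fun j => tendsto_sum_mul_of_opposite (exists_constraintPD_pair_sq aa bb hsn j) hz1 hle1))
    (fun i => tendsto_sum_mul_of_opposite (exists_constraintPD_pair_binary aa bb hsn i) hz1 hle1)
    ((continuous_snd.tendsto p).comp hz) (fun k => by simpa [hf, Prod.snd_sum] using (hle k).2)
  refine ⟨_, ⟨xs, hxs, rfl⟩, (0, p.2 - f xs), ⟨le_rfl, sub_nonneg.2 (hf xs ▸ hxsf)⟩,
    Prod.ext ?_ (add_sub_cancel _ _)⟩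
  exact (add_zero _).trans ((funext (constraintPD_eq_zero aa bb hsn hxslin hxsbin)).trans hp0.symm)
end

section
/- For every x ∈ ℝ^n, the maximum of xᵀAx + cᵀx over all pairs (c, A) ∈ 𝒰 × 𝒱 equals xᵀ(A_0 + ρ·I_n)x + max_{1 ≤ k ≤ q} (c_0ᵀx + Σ_{l=1}^L ξ_l^{(k)} c_lᵀx), and this maximum is attained. -/
/-!
The objective separates: `x ⬝ᵥ (A₀ + V) *ᵥ x + c ⬝ᵥ x` is the sum of a term depending only on
`V ∈ 𝒱` and an affine function of the scenario weights `ξ` parametrising `c ∈ 𝒰`.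
The first is at most `ρ ‖x‖²` by Cauchy–Schwarz and the operator-norm bound, with equality at
`V = ρ • 1`; the second is affine, hence convex, so its maximum over the convex hull of the
scenarios is attained at one of them.
-/

open Matrix Finset Set RealInnerProductSpace

theorem ConvexOn.isGreatest_image_convexHull_range {𝕜 E β ι : Type*} [Field 𝕜] [LinearOrder 𝕜]
    [IsStrictOrderedRing 𝕜] [AddCommGroup E] [Module 𝕜 E] [AddCommGroup β] [LinearOrder β]
    [IsOrderedAddMonoid β] [Module 𝕜 β] [IsStrictOrderedModule 𝕜 β] [Fintype ι]
    {ξ : ι → E} {f : E → β} (hf : ConvexOn 𝕜 (convexHull 𝕜 (range ξ)) f)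
    (hι : (univ : Finset ι).Nonempty) :
    IsGreatest (f '' convexHull 𝕜 (range ξ)) (univ.sup' hι (f ∘ ξ)) := by
  obtain ⟨k, -, hk⟩ := exists_mem_eq_sup' hι (f ∘ ξ)
  refine ⟨⟨ξ k, subset_convexHull 𝕜 _ ⟨k, rfl⟩, hk.symm⟩, ?_⟩
  rintro _ ⟨z, hz, rfl⟩
  obtain ⟨_, ⟨j, rfl⟩, hj⟩ := hf.exists_ge_of_mem_convexHull (subset_convexHull 𝕜 _) hz
  exact hj.trans (le_sup' (f ∘ ξ) (mem_univ j))

theorem Matrix.dotProduct_mulVec_self_le_of_norm_toEuclideanCLM_le {n : Type*} [Fintype n]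
    [DecidableEq n] {A : Matrix n n ℝ} {ρ : ℝ} (hA : ‖toEuclideanCLM (𝕜 := ℝ) A‖ ≤ ρ)
    (x : n → ℝ) : x ⬝ᵥ A *ᵥ x ≤ ρ * (x ⬝ᵥ x) := by
  set y : EuclideanSpace ℝ n := WithLp.toLp 2 x
  have hquad : ∀ B : Matrix n n ℝ, x ⬝ᵥ B *ᵥ x = ⟪y, toEuclideanCLM (𝕜 := ℝ) B y⟫ :=
    fun B => (inner_toEuclideanCLM B y y).symm
  have hnorm : x ⬝ᵥ x = ‖y‖ ^ 2 := by
    simpa [real_inner_self_eq_norm_sq] using hquad 1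
  rw [hquad, hnorm]
  calc ⟪y, toEuclideanCLM (𝕜 := ℝ) A y⟫ ≤ ‖y‖ * (‖toEuclideanCLM (𝕜 := ℝ) A‖ * ‖y‖) :=
        (real_inner_le_norm _ _).trans (by gcongr; exact ContinuousLinearMap.le_opNorm _ _)
    _ ≤ ρ * ‖y‖ ^ 2 := by nlinarith [norm_nonneg y]

theorem Matrix.norm_toEuclideanCLM_smul_one_le {n : Type*} [Fintype n] [DecidableEq n] (r : ℝ) :
    ‖toEuclideanCLM (𝕜 := ℝ) (r • 1 : Matrix n n ℝ)‖ ≤ |r| := by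
  rw [map_smul, map_one, norm_smul, Real.norm_eq_abs]
  exact mul_le_of_le_one_right (abs_nonneg r) ContinuousLinearMap.norm_id_le

theorem stmt_12_general (n L q : ℕ) (hq : 1 ≤ q) (ρ : ℝ) (hρ : 0 ≤ ρ)
    (c₀ : Fin n → ℝ) (cc : Fin L → Fin n → ℝ) (ξ : Fin q → Fin L → ℝ)
    (A₀ : Matrix (Fin n) (Fin n) ℝ)
    (specNorm : Matrix (Fin n) (Fin n) ℝ → ℝ)
    (hspec : ∀ V : Matrix (Fin n) (Fin n) ℝ,
      specNorm V = ‖Matrix.toEuclideanCLM (𝕜 := ℝ) (n := Fin n) V‖)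
    (𝒰 : Set (Fin n → ℝ))
    (h𝒰 : 𝒰 = (fun z : Fin L → ℝ => c₀ + ∑ l, z l • cc l) ''
        convexHull ℝ (Set.range ξ))
    (𝒱 : Set (Matrix (Fin n) (Fin n) ℝ))
    (h𝒱 : 𝒱 = {M | ∃ V : Matrix (Fin n) (Fin n) ℝ,
        V.IsSymm ∧ specNorm V ≤ ρ ∧ M = A₀ + V})
    (x : Fin n → ℝ) :
    IsGreatest {t : ℝ | ∃ cv ∈ 𝒰, ∃ Av ∈ 𝒱, t = x ⬝ᵥ Av *ᵥ x + cv ⬝ᵥ x}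
      (x ⬝ᵥ (A₀ + ρ • (1 : Matrix (Fin n) (Fin n) ℝ)) *ᵥ x
        + (Finset.univ.sup' ⟨⟨0, hq⟩, Finset.mem_univ _⟩
            fun k => c₀ ⬝ᵥ x + ∑ l, ξ k l * (cc l ⬝ᵥ x))) := by
  obtain rfl : specNorm = _ := funext hspec
  subst h𝒰 h𝒱
  set w : Fin L → ℝ := fun l => cc l ⬝ᵥ x
  have hlinear : ∀ z : Fin L → ℝ, (c₀ + ∑ l, z l • cc l) ⬝ᵥ x = c₀ ⬝ᵥ x + z ⬝ᵥ w := by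
    intro z
    simp only [add_dotProduct, sum_dotProduct, smul_dotProduct, smul_eq_mul]
    rfl
  have hsplit (V : Matrix (Fin n) (Fin n) ℝ) :
      x ⬝ᵥ (A₀ + V) *ᵥ x = x ⬝ᵥ A₀ *ᵥ x + x ⬝ᵥ V *ᵥ x := by
    rw [add_mulVec, dotProduct_add]
  have hconv : ConvexOn ℝ (convexHull ℝ (range ξ)) fun z => c₀ ⬝ᵥ x + z ⬝ᵥ w :=
    (convexOn_const _ (convex_convexHull ℝ _)).add
      (((dotProductBilin ℝ ℝ).flip w).convexOn (convex_convexHull ℝ _))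
  obtain ⟨⟨z, hz, hz_eq⟩, hz_max⟩ :
      IsGreatest ((fun z => c₀ ⬝ᵥ x + z ⬝ᵥ w) '' convexHull ℝ (range ξ))
        (univ.sup' ⟨⟨0, hq⟩, mem_univ _⟩ fun k => c₀ ⬝ᵥ x + ∑ l, ξ k l * (cc l ⬝ᵥ x)) :=
    hconv.isGreatest_image_convexHull_range _
  refine ⟨⟨_, ⟨z, hz, rfl⟩, A₀ + ρ • 1, ⟨ρ • 1, isSymm_one.smul ρ, ?_, rfl⟩, ?_⟩, ?_⟩
  · simpa only [abs_of_nonneg hρ] using norm_toEuclideanCLM_smul_one_le ρ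
  · rw [hlinear, ← hz_eq]
  · rintro _ ⟨_, ⟨z', hz', rfl⟩, _, ⟨V, -, hV, rfl⟩, rfl⟩
    have hV_le := dotProduct_mulVec_self_le_of_norm_toEuclideanCLM_le hV x
    have hz'_le := hz_max ⟨z', hz', rfl⟩
    rw [hsplit, hsplit, hlinear, smul_mulVec, one_mulVec, dotProduct_smul, smul_eq_mul]
    linarith

/-- For every x ∈ ℝ^n, the maximum of xᵀAx + cᵀx over (c, A) ∈ 𝒰 × 𝒱
equals xᵀ(A₀ + ρIₙ)x + max_{1≤k≤q}(c₀ᵀx + Σ_l ξ_l^{(k)} c_lᵀx), and it is attained.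
Here 𝒰 is the polyhedral uncertainty set generated by the scenarios ξ^{(k)} and 𝒱 is
the spectral-norm uncertainty set around A₀. -/
theorem stmt_12 (n L q : ℕ) (hq : 1 ≤ q) (ρ : ℝ) (hρ : 0 ≤ ρ)
    (c₀ : Fin n → ℝ) (cc : Fin L → Fin n → ℝ) (ξ : Fin q → Fin L → ℝ)
    (A₀ : Matrix (Fin n) (Fin n) ℝ) (hA₀ : A₀.IsSymm)
    (specNorm : Matrix (Fin n) (Fin n) ℝ → ℝ)
    (hspec : ∀ V : Matrix (Fin n) (Fin n) ℝ,
      specNorm V = ‖Matrix.toEuclideanCLM (𝕜 := ℝ) (n := Fin n) V‖)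
    (𝒰 : Set (Fin n → ℝ))
    (h𝒰 : 𝒰 = (fun z : Fin L → ℝ => c₀ + ∑ l, z l • cc l) ''
        convexHull ℝ (Set.range ξ))
    (𝒱 : Set (Matrix (Fin n) (Fin n) ℝ))
    (h𝒱 : 𝒱 = {M | ∃ V : Matrix (Fin n) (Fin n) ℝ,
        V.IsSymm ∧ specNorm V ≤ ρ ∧ M = A₀ + V})
    (x : Fin n → ℝ) :
    IsGreatest {t : ℝ | ∃ cv ∈ 𝒰, ∃ Av ∈ 𝒱, t = x ⬝ᵥ Av *ᵥ x + cv ⬝ᵥ x}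
      (x ⬝ᵥ (A₀ + ρ • (1 : Matrix (Fin n) (Fin n) ℝ)) *ᵥ x
        + (Finset.univ.sup' ⟨⟨0, hq⟩, Finset.mem_univ _⟩
            fun k => c₀ ⬝ᵥ x + ∑ l, ξ k l * (cc l ⬝ᵥ x))) :=
  stmt_12_general n L q hq ρ hρ c₀ cc ξ A₀ specNorm hspec 𝒰 h𝒰 𝒱 h𝒱 x
end

section
/- Let 𝒜 = {(x(x−1), −x(x−1), x²) : x ∈ ℝ, x ≥ 0} + ℝ³_+ ⊆ ℝ³. Then ({(0,0)} × ℝ) ∩ cl conv 𝒜 = ({(0,0)} × ℝ) ∩ 𝒜 = {(0,0)} × [0, +∞) (so the corresponding problem is convexifiable); but 𝒜 is not convex: (0,0,0) ∈ 𝒜 and (2,−2,4) ∈ 𝒜 while their midpoint (1,−1,2) ∉ 𝒜. -/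
open Pointwise

/-- For 𝒜 = {(x(x−1), −x(x−1), x²) : x ≥ 0} + ℝ³_+ one has
({(0,0)} × ℝ) ∩ cl conv 𝒜 = ({(0,0)} × ℝ) ∩ 𝒜 = {(0,0)} × [0,∞) (convexifiability),
but 𝒜 is not convex: (0,0,0), (2,−2,4) ∈ 𝒜 while their midpoint (1,−1,2) ∉ 𝒜. -/
theorem stmt_14 (𝒜 : Set ((ℝ × ℝ) × ℝ))
    (h𝒜 : 𝒜 = (fun x : ℝ => ((x * (x - 1), -(x * (x - 1))), x ^ 2)) '' {x | 0 ≤ x}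
        + {q : (ℝ × ℝ) × ℝ | 0 ≤ q.1.1 ∧ 0 ≤ q.1.2 ∧ 0 ≤ q.2}) :
    ({p : (ℝ × ℝ) × ℝ | p.1 = 0} ∩ closure (convexHull ℝ 𝒜)
        = {p : (ℝ × ℝ) × ℝ | p.1 = 0} ∩ 𝒜) ∧
    ({p : (ℝ × ℝ) × ℝ | p.1 = 0} ∩ 𝒜 = {p : (ℝ × ℝ) × ℝ | p.1 = 0 ∧ 0 ≤ p.2}) ∧
    (((0 : ℝ), (0 : ℝ)), (0 : ℝ)) ∈ 𝒜 ∧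
    (((2 : ℝ), (-2 : ℝ)), (4 : ℝ)) ∈ 𝒜 ∧
    (((1 : ℝ), (-1 : ℝ)), (2 : ℝ)) ∉ 𝒜 ∧
    ¬ Convex ℝ 𝒜 := by
  have hmem : ∀ p : (ℝ × ℝ) × ℝ, p ∈ 𝒜 ↔
      ∃ x : ℝ, 0 ≤ x ∧ x * (x - 1) ≤ p.1.1 ∧ -(x * (x - 1)) ≤ p.1.2 ∧ x ^ 2 ≤ p.2 := by
    intro p
    rw [h𝒜, Set.mem_add]
    constructor
    · rintro ⟨a, ⟨x, hx, rfl⟩, b, ⟨hb1, hb2, hb3⟩, rfl⟩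
      exact ⟨x, hx, by simpa using hb1.trans (by simp), by simp; linarith, by simp; linarith⟩
    · rintro ⟨x, hx, h1, h2, h3⟩
      refine ⟨_, ⟨x, hx, rfl⟩, ((p.1.1 - x * (x - 1), p.1.2 + x * (x - 1)), p.2 - x ^ 2),
        ⟨by simpa using h1, by simp; linarith, by simpa using h3⟩, ?_⟩
      simp [Prod.ext_iff]
  have hB : {p : (ℝ × ℝ) × ℝ | p.1 = 0} ∩ 𝒜 = {p : (ℝ × ℝ) × ℝ | p.1 = 0 ∧ 0 ≤ p.2} := by
    ext p
    simp only [Set.mem_inter_iff, Set.mem_setOf_eq, hmem]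
    constructor
    · rintro ⟨hp1, x, hx, h1, h2, h3⟩
      exact ⟨hp1, le_trans (sq_nonneg x) h3⟩
    · rintro ⟨hp1, hp2⟩
      refine ⟨hp1, 0, le_refl 0, ?_, ?_, by simpa using hp2⟩ <;> simp [hp1]
  have h00 : (((0 : ℝ), (0 : ℝ)), (0 : ℝ)) ∈ 𝒜 := by
    rw [hmem]; exact ⟨0, by norm_num⟩
  have h22 : (((2 : ℝ), (-2 : ℝ)), (4 : ℝ)) ∈ 𝒜 := by
    rw [hmem]; exact ⟨2, by norm_num⟩
  have hmid : (((1 : ℝ), (-1 : ℝ)), (2 : ℝ)) ∉ 𝒜 := by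
    rw [hmem]
    rintro ⟨x, hx, h1, h2, h3⟩
    simp only at h1 h2 h3
    nlinarith [sq_nonneg x, sq_nonneg (x - 1), mul_nonneg hx hx]
  refine ⟨?_, hB, h00, h22, hmid, ?_⟩
  · have hsub : closure (convexHull ℝ 𝒜) ⊆ {a : (ℝ × ℝ) × ℝ | 0 ≤ a.2} := by
      apply closure_minimal
      · apply convexHull_min
        · intro a ha
          rw [hmem] at ha
          obtain ⟨x, hx, _, _, h3⟩ := ha
          exact le_trans (sq_nonneg x) h3
        · intro a ha b hb u v hu hv huv
          simp only [Set.mem_setOf_eq] at *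
          have : (u • a + v • b).2 = u * a.2 + v * b.2 := rfl
          rw [this]
          have := mul_nonneg hu ha
          have := mul_nonneg hv hb
          linarith
      · exact isClosed_le continuous_const (continuous_snd)
    ext p
    constructor
    · rintro ⟨hp1, hp2⟩
      have h2 : 0 ≤ p.2 := hsub hp2
      have hm : p ∈ {p : (ℝ × ℝ) × ℝ | p.1 = 0} ∩ 𝒜 := by
        rw [hB]; exact ⟨hp1, h2⟩
      exact hm
    · rintro ⟨hp1, hp2⟩
      exact ⟨hp1, subset_closure (subset_convexHull ℝ 𝒜 hp2)⟩
  · intro hc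
    have := hc h00 h22 (by norm_num : (0:ℝ) ≤ 1/2) (by norm_num : (0:ℝ) ≤ 1/2) (by norm_num)
    apply hmid
    convert this using 1
    simp [Prod.ext_iff, Prod.smul_def]
    norm_num
end

section
/- Let 𝒜 = {(−x_1 x_2, x_1) : (x_1, x_2) ∈ ℝ²_+} + ℝ²_+ ⊆ ℝ². Then ({0} × ℝ) ∩ cl conv 𝒜 = ({0} × ℝ) ∩ 𝒜 = {0} × [0, +∞) (so the corresponding problem is convexifiable); but 𝒜 is not closed: (−1, 1/k) ∈ 𝒜 for every positive integer k while (−1, 0) ∉ 𝒜. -/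
open Pointwise

/-- For 𝒜 = {(−x₁x₂, x₁) : (x₁,x₂) ∈ ℝ²_+} + ℝ²_+ one has
({0} × ℝ) ∩ cl conv 𝒜 = ({0} × ℝ) ∩ 𝒜 = {0} × [0,∞) (convexifiability), but 𝒜 is
not closed: (−1, 1/k) ∈ 𝒜 for every positive integer k while (−1, 0) ∉ 𝒜. -/
theorem stmt_15 (𝒜 : Set (ℝ × ℝ))
    (h𝒜 : 𝒜 = (fun x : ℝ × ℝ => (-(x.1 * x.2), x.1)) '' {x | 0 ≤ x.1 ∧ 0 ≤ x.2}
        + {q : ℝ × ℝ | 0 ≤ q.1 ∧ 0 ≤ q.2}) :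
    ({p : ℝ × ℝ | p.1 = 0} ∩ closure (convexHull ℝ 𝒜)
        = {p : ℝ × ℝ | p.1 = 0} ∩ 𝒜) ∧
    ({p : ℝ × ℝ | p.1 = 0} ∩ 𝒜 = {p : ℝ × ℝ | p.1 = 0 ∧ 0 ≤ p.2}) ∧
    (∀ k : ℕ, 0 < k → ((-1 : ℝ), (1 : ℝ) / k) ∈ 𝒜) ∧
    ((-1 : ℝ), (0 : ℝ)) ∉ 𝒜 ∧
    ¬ IsClosed 𝒜 := by
  -- characterization of membership
  have hmem : ∀ u v : ℝ, (u, v) ∈ 𝒜 ↔ (0 < v ∨ (v = 0 ∧ 0 ≤ u)) := by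
    intro u v
    rw [h𝒜]
    constructor
    · rintro ⟨a, ⟨x, ⟨hx1, hx2⟩, rfl⟩, q, ⟨hq1, hq2⟩, heq⟩
      have h1 : -(x.1 * x.2) + q.1 = u := congrArg Prod.fst heq
      have h2 : x.1 + q.2 = v := congrArg Prod.snd heq
      rcases lt_or_eq_of_le (by linarith : (0:ℝ) ≤ v) with hv | hv
      · exact Or.inl hv
      · right
        refine ⟨hv.symm, ?_⟩
        have hx0 : x.1 = 0 := by linarith
        have : x.1 * x.2 = 0 := by rw [hx0]; ring
        linarith
    · rintro (hv | ⟨hv, hu⟩)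
      · refine ⟨(-(v * (max 0 (-u) / v)), v), ⟨(v, max 0 (-u) / v),
          ⟨le_of_lt hv, div_nonneg (le_max_left 0 (-u)) hv.le⟩, rfl⟩,
          (u + v * (max 0 (-u) / v), 0), ⟨?_, le_refl 0⟩, ?_⟩
        · show (0:ℝ) ≤ u + v * (max 0 (-u) / v)
          have h : v * (max 0 (-u) / v) = max 0 (-u) := by field_simp
          rw [h]
          have := le_max_right 0 (-u)
          linarith
        · ext <;> simp
      · subst hv
        exact ⟨(0, 0), ⟨(0, 0), ⟨le_refl 0, le_refl 0⟩, by norm_num⟩,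
          (u, 0), ⟨hu, le_refl 0⟩, by norm_num⟩
  have hmem' : ∀ p : ℝ × ℝ, p ∈ 𝒜 ↔ (0 < p.2 ∨ (p.2 = 0 ∧ 0 ≤ p.1)) := by
    intro p; rw [← hmem p.1 p.2]
  have hsub : 𝒜 ⊆ {p : ℝ × ℝ | 0 ≤ p.2} := by
    intro p hp
    rcases (hmem' p).mp hp with h | h
    · exact h.le
    · exact h.1.ge
  have hconv : Convex ℝ {p : ℝ × ℝ | 0 ≤ p.2} := by
    intro x hx y hy a b ha hb hab
    simp only [Set.mem_setOf_eq] at *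
    have : (a • x + b • y).2 = a * x.2 + b * y.2 := rfl
    rw [this]
    nlinarith
  have hclosed : IsClosed {p : ℝ × ℝ | 0 ≤ p.2} :=
    isClosed_le continuous_const continuous_snd
  have hcl : closure (convexHull ℝ 𝒜) ⊆ {p : ℝ × ℝ | 0 ≤ p.2} :=
    closure_minimal (convexHull_min hsub hconv) hclosed
  refine ⟨?_, ?_, ?_, ?_, ?_⟩
  · ext p
    constructor
    · rintro ⟨hp1, hp2⟩
      refine ⟨hp1, (hmem' p).mpr ?_⟩
      rcases lt_or_eq_of_le (show (0:ℝ) ≤ p.2 from hcl hp2) with h | h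
      · exact Or.inl h
      · exact Or.inr ⟨h.symm, le_of_eq hp1.symm⟩
    · rintro ⟨hp1, hp2⟩
      exact ⟨hp1, subset_closure (subset_convexHull ℝ 𝒜 hp2)⟩
  · ext p
    constructor
    · rintro ⟨hp1, hp2⟩
      exact ⟨hp1, hsub hp2⟩
    · rintro ⟨hp1, hp2⟩
      refine ⟨hp1, (hmem' p).mpr ?_⟩
      rcases lt_or_eq_of_le hp2 with h | h
      · exact Or.inl h
      · exact Or.inr ⟨h.symm, le_of_eq hp1.symm⟩
  · intro k hk
    exact (hmem _ _).mpr (Or.inl (by positivity))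
  · intro h
    rcases (hmem _ _).mp h with h | h
    · linarith
    · linarith [h.2]
  · intro hcl𝒜
    have hlim : Filter.Tendsto (fun n : ℕ => ((-1 : ℝ), (1 : ℝ) / (n + 1)))
        Filter.atTop (nhds ((-1 : ℝ), (0 : ℝ))) := by
      refine Filter.Tendsto.prodMk_nhds tendsto_const_nhds ?_
      exact tendsto_one_div_add_atTop_nhds_zero_nat
    have hmemA : ∀ n : ℕ, ((-1 : ℝ), (1 : ℝ) / (n + 1)) ∈ 𝒜 := by
      intro n
      exact (hmem _ _).mpr (Or.inl (by positivity))
    have : ((-1 : ℝ), (0 : ℝ)) ∈ 𝒜 :=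
      hcl𝒜.mem_of_tendsto hlim (Filter.Eventually.of_forall hmemA)
    rcases (hmem _ _).mp this with h | h
    · linarith
    · linarith [h.2]
end

section
/- Let B = [[1,1],[1,−1]] and A = [[−2,1],[1,1]] (real symmetric 2×2 matrices, neither of which is copositive). Then the set Υ = {(xᵀBx, xᵀAx) : x ∈ ℝ²_+} + ℝ²_+ = {(x_1² − x_2² + 2x_1x_2, −2x_1² + x_2² + 2x_1x_2) : (x_1,x_2) ∈ ℝ²_+} + ℝ²_+ is not convex: (−1, 1) ∈ Υ and (1, −2) ∈ Υ, but their midpoint (0, −1/2) ∉ Υ; that is, there is no (x_1, x_2) with x_1 ≥ 0, x_2 ≥ 0, x_1² − x_2² + 2x_1x_2 ≤ 0, and −2x_1² + x_2² + 2x_1x_2 ≤ −1/2. -/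
open Pointwise Matrix

lemma key16 : ¬ ∃ x : ℝ × ℝ, 0 ≤ x.1 ∧ 0 ≤ x.2 ∧ x.1 ^ 2 - x.2 ^ 2 + 2 * x.1 * x.2 ≤ 0 ∧
        -2 * x.1 ^ 2 + x.2 ^ 2 + 2 * x.1 * x.2 ≤ -(1 / 2) := by
  rintro ⟨⟨a, b⟩, ha, hb, h1, h2⟩
  simp only at ha hb h1 h2
  have hab : a ≤ b := by nlinarith [mul_nonneg ha hb, sq_nonneg (a + b)]
  nlinarith [mul_nonneg ha hb, mul_nonneg ha ha, mul_le_mul_of_nonneg_left hab ha]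

/-- For B = [[1,1],[1,−1]] and A = [[−2,1],[1,1]] (neither copositive),
the set Υ = {(xᵀBx, xᵀAx) : x ∈ ℝ²_+} + ℝ²_+
= {(x₁² − x₂² + 2x₁x₂, −2x₁² + x₂² + 2x₁x₂) : (x₁,x₂) ∈ ℝ²_+} + ℝ²_+ is not convex:
(−1,1) ∈ Υ and (1,−2) ∈ Υ but their midpoint (0, −1/2) ∉ Υ, i.e. no (x₁,x₂) ≥ 0
satisfies x₁² − x₂² + 2x₁x₂ ≤ 0 and −2x₁² + x₂² + 2x₁x₂ ≤ −1/2. -/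
theorem stmt_16 (B A : Matrix (Fin 2) (Fin 2) ℝ)
    (hB : B = !![1, 1; 1, -1]) (hA : A = !![-2, 1; 1, 1])
    (Υ : Set (ℝ × ℝ))
    (hΥ : Υ = (fun x : ℝ × ℝ =>
          (x.1 ^ 2 - x.2 ^ 2 + 2 * x.1 * x.2, -2 * x.1 ^ 2 + x.2 ^ 2 + 2 * x.1 * x.2)) ''
        {x | 0 ≤ x.1 ∧ 0 ≤ x.2} + {q : ℝ × ℝ | 0 ≤ q.1 ∧ 0 ≤ q.2}) :
    B.IsSymm ∧ A.IsSymm ∧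
    (¬ ∀ x : Fin 2 → ℝ, (∀ j, 0 ≤ x j) → 0 ≤ x ⬝ᵥ B *ᵥ x) ∧
    (¬ ∀ x : Fin 2 → ℝ, (∀ j, 0 ≤ x j) → 0 ≤ x ⬝ᵥ A *ᵥ x) ∧
    (∀ x : ℝ × ℝ, ![x.1, x.2] ⬝ᵥ B *ᵥ ![x.1, x.2] = x.1 ^ 2 - x.2 ^ 2 + 2 * x.1 * x.2) ∧
    (∀ x : ℝ × ℝ, ![x.1, x.2] ⬝ᵥ A *ᵥ ![x.1, x.2] = -2 * x.1 ^ 2 + x.2 ^ 2 + 2 * x.1 * x.2) ∧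
    ((-1 : ℝ), (1 : ℝ)) ∈ Υ ∧ ((1 : ℝ), (-2 : ℝ)) ∈ Υ ∧
    ((0 : ℝ), -(1 / 2 : ℝ)) ∉ Υ ∧
    (¬ ∃ x : ℝ × ℝ, 0 ≤ x.1 ∧ 0 ≤ x.2 ∧ x.1 ^ 2 - x.2 ^ 2 + 2 * x.1 * x.2 ≤ 0 ∧
        -2 * x.1 ^ 2 + x.2 ^ 2 + 2 * x.1 * x.2 ≤ -(1 / 2)) ∧
    ¬ Convex ℝ Υ := by
  subst hB hA hΥ
  have hmem1 : ((-1 : ℝ), (1 : ℝ)) ∈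
      (fun x : ℝ × ℝ =>
          (x.1 ^ 2 - x.2 ^ 2 + 2 * x.1 * x.2, -2 * x.1 ^ 2 + x.2 ^ 2 + 2 * x.1 * x.2)) ''
        {x | 0 ≤ x.1 ∧ 0 ≤ x.2} + {q : ℝ × ℝ | 0 ≤ q.1 ∧ 0 ≤ q.2} := by
    rw [Set.mem_add]
    exact ⟨(-1, 1), ⟨((0 : ℝ), (1 : ℝ)), by norm_num, by norm_num⟩, (0, 0), by norm_num,
      by norm_num⟩
  have hmem2 : ((1 : ℝ), (-2 : ℝ)) ∈
      (fun x : ℝ × ℝ =>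
          (x.1 ^ 2 - x.2 ^ 2 + 2 * x.1 * x.2, -2 * x.1 ^ 2 + x.2 ^ 2 + 2 * x.1 * x.2)) ''
        {x | 0 ≤ x.1 ∧ 0 ≤ x.2} + {q : ℝ × ℝ | 0 ≤ q.1 ∧ 0 ≤ q.2} := by
    rw [Set.mem_add]
    exact ⟨(1, -2), ⟨((1 : ℝ), (0 : ℝ)), by norm_num, by norm_num⟩, (0, 0), by norm_num,
      by norm_num⟩
  have hnot : ((0 : ℝ), -(1 / 2 : ℝ)) ∉
      (fun x : ℝ × ℝ =>
          (x.1 ^ 2 - x.2 ^ 2 + 2 * x.1 * x.2, -2 * x.1 ^ 2 + x.2 ^ 2 + 2 * x.1 * x.2)) ''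
        {x | 0 ≤ x.1 ∧ 0 ≤ x.2} + {q : ℝ × ℝ | 0 ≤ q.1 ∧ 0 ≤ q.2} := by
    rw [Set.mem_add]
    rintro ⟨p, ⟨⟨a, b⟩, ⟨ha, hb⟩, rfl⟩, q, ⟨hq1, hq2⟩, heq⟩
    simp only [Prod.ext_iff, Prod.fst_add, Prod.snd_add] at heq
    exact key16 ⟨(a, b), ha, hb, by linarith [heq.1], by linarith [heq.2]⟩
  refine ⟨by ext i j; fin_cases i <;> fin_cases j <;> rfl, by ext i j; fin_cases i <;> fin_cases j <;> rfl, ?_, ?_, ?_, ?_, hmem1, hmem2, hnot, key16, ?_⟩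
  · intro h
    have := h ![0, 1] (by intro j; fin_cases j <;> norm_num)
    simp [dotProduct, Matrix.mulVec, Fin.sum_univ_two] at this
    linarith
  · intro h
    have := h ![1, 0] (by intro j; fin_cases j <;> norm_num)
    simp [dotProduct, Matrix.mulVec, Fin.sum_univ_two] at this
    linarith
  · intro x
    simp [dotProduct, Matrix.mulVec, Fin.sum_univ_two]
    ring
  · intro x
    simp [dotProduct, Matrix.mulVec, Fin.sum_univ_two]
    ring
  · intro hc
    have := hc hmem1 hmem2 (by norm_num : (0:ℝ) ≤ 1/2) (by norm_num : (0:ℝ) ≤ 1/2)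
      (by norm_num)
    apply hnot
    convert this using 2 <;> norm_num [Prod.ext_iff, Prod.smul_mk, smul_eq_mul]
end

section
/- Suppose there exist γ ≥ 0 and β_0, β_1, …, β_m ≥ 0 such that the matrix (γ + Σ_{i=0}^m α_i β_i)·A is strictly copositive. Then the set 𝒜_{P2} = {(g_0(x), g_1(x), …, g_m(x), f(x)) : x ∈ ℝ^n_+} + ℝ^{m+2}_+ is closed. -/
/-!
The functional `ℓ (u, t) = γ * t + ∑ i, β i * u i` is nonnegative on the cone `ℝ^{m+2}_+`, and
`ℓ ∘ (g, f) = γ f + ∑ βᵢ gᵢ` is a quadratic with Hessian `(γ + ∑ αᵢ βᵢ) A`. Strict copositivity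
makes it grow like `δ ‖x‖²` on `ℝⁿ_+`, so its sublevel sets there are bounded. Near a limit point
`p` of `𝒜`, only points `x` of the compact set `T = {x ≥ 0 | ℓ (g x, f x) ≤ ℓ p + 1}` contribute,
and `(g, f)(T) + ℝ^{m+2}_+`, a compact set plus a closed one, is closed.
-/

open Pointwise Matrix

open Bornology Set

theorem isBounded_of_forall_mul_sq_norm_le {E : Type*} [SeminormedAddCommGroup E] {s : Set E}
    {δ D C : ℝ} (hδ : 0 < δ) (h : ∀ x ∈ s, δ * ‖x‖ ^ 2 ≤ D * ‖x‖ + C) : IsBounded s := by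
  refine isBounded_iff_forall_norm_le.2 ⟨max 1 ((|D| + |C|) / δ), fun x hx => ?_⟩
  rcases le_or_gt ‖x‖ 1 with hx1 | hx1
  · exact hx1.trans (le_max_left _ _)
  refine (le_div_iff₀ hδ).2 ?_ |>.trans (le_max_right _ _)
  nlinarith [h x hx, le_abs_self D, le_abs_self C, abs_nonneg C]

theorem isClosed_image_add_of_isBounded_sublevel {E V : Type*} [PseudoMetricSpace E]
    [ProperSpace E] [TopologicalSpace V] [AddCommGroup V] [IsTopologicalAddGroup V]
    {S : Set E} {K : Set V} {F : E → V} {ℓ : V → ℝ} (hS : IsClosed S) (hK : IsClosed K)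
    (hF : ContinuousOn F S) (hℓ : Continuous ℓ) (hℓK : ∀ v, ∀ k ∈ K, ℓ v ≤ ℓ (v + k))
    (hbdd : ∀ C, IsBounded {x ∈ S | ℓ (F x) ≤ C}) :
    IsClosed (F '' S + K) := by
  refine closure_subset_iff_isClosed.1 fun p hp => ?_
  set T := {x ∈ S | ℓ (F x) ≤ ℓ p + 1}
  have hT : IsCompact T := Metric.isCompact_of_isClosed_isBounded
    (hF.preimage_isClosed_of_isClosed hS (isClosed_le hℓ continuous_const)) (hbdd _)
  have hTK : IsClosed (F '' T + K) :=
    hK.add_left_of_isCompact (hT.image_of_continuousOn (hF.mono (sep_subset _ _)))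
  have hU : IsOpen {v | ℓ v < ℓ p + 1} := isOpen_lt hℓ continuous_const
  have hsub : {v | ℓ v < ℓ p + 1} ∩ (F '' S + K) ⊆ F '' T + K := by
    rintro _ ⟨hv, _, ⟨x, hx, rfl⟩, k, hk, rfl⟩
    exact ⟨F x, ⟨x, ⟨hx, (hℓK _ k hk).trans hv.le⟩, rfl⟩, k, hk, rfl⟩
  have hpT : p ∈ F '' T + K :=
    closure_minimal hsub hTK (hU.inter_closure ⟨lt_add_one (ℓ p), hp⟩)
  exact add_subset_add_right (image_mono (sep_subset _ _)) hpT

namespace Matrix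

variable {ι κ : Type*} [Fintype ι]

def StrictlyCopositive (M : Matrix ι ι ℝ) : Prop :=
  ∀ x : ι → ℝ, 0 ≤ x → x ≠ 0 → 0 < x ⬝ᵥ M *ᵥ x

theorem smul_dotProduct_mulVec_smul (M : Matrix ι ι ℝ) (r : ℝ) (x : ι → ℝ) :
    (r • x) ⬝ᵥ M *ᵥ (r • x) = r ^ 2 * (x ⬝ᵥ M *ᵥ x) := by
  simp only [mulVec_smul, dotProduct_smul, smul_dotProduct, smul_eq_mul]
  ring

theorem StrictlyCopositive.exists_pos_mul_sq_norm_le {M : Matrix ι ι ℝ}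
    (hM : M.StrictlyCopositive) :
    ∃ δ > 0, ∀ x : ι → ℝ, 0 ≤ x → δ * ‖x‖ ^ 2 ≤ x ⬝ᵥ M *ᵥ x := by
  set T : Set (ι → ℝ) := {y | 0 ≤ y ∧ ‖y‖ = 1}
  have hT : IsCompact T :=
    Metric.isCompact_of_isClosed_isBounded (isClosed_Ici.inter (isClosed_eq continuous_norm
      continuous_const)) (isBounded_iff_forall_norm_le.2 ⟨1, fun y hy => hy.2.le⟩)
  have hpos : ∀ y ∈ T, 0 < y ⬝ᵥ M *ᵥ y := fun y hy =>
    hM y hy.1 (norm_ne_zero_iff.1 (hy.2.symm ▸ one_ne_zero))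
  obtain ⟨δ, hδ, hδT⟩ := hT.exists_forall_le' (by fun_prop) hpos
  refine ⟨δ, hδ, fun x hx => ?_⟩
  rcases eq_or_ne x 0 with rfl | hx0
  · simp
  have hnx : 0 < ‖x‖ := norm_pos_iff.2 hx0
  have hyT : ‖x‖⁻¹ • x ∈ T :=
    ⟨smul_nonneg (inv_nonneg.2 hnx.le) hx, by rw [norm_smul, norm_inv, norm_norm,
      inv_mul_cancel₀ hnx.ne']⟩
  calc δ * ‖x‖ ^ 2 ≤ ‖x‖ ^ 2 * ((‖x‖⁻¹ • x) ⬝ᵥ M *ᵥ (‖x‖⁻¹ • x)) := by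
        rw [mul_comm]; exact mul_le_mul_of_nonneg_left (hδT _ hyT) (sq_nonneg _)
    _ = x ⬝ᵥ M *ᵥ x := by
        rw [smul_dotProduct_mulVec_smul, ← mul_assoc, ← mul_pow, mul_inv_cancel₀ hnx.ne',
          one_pow, one_mul]

theorem abs_dotProduct_le (d x : ι → ℝ) : |d ⬝ᵥ x| ≤ (∑ j, |d j|) * ‖x‖ := by
  calc |d ⬝ᵥ x| ≤ ∑ j, |d j| * |x j| := by
        simpa only [dotProduct, abs_mul] using Finset.abs_sum_le_sum_abs (fun j => d j * x j) _
    _ ≤ ∑ j, |d j| * ‖x‖ := by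
        gcongr with j; exact norm_le_pi_norm x j
    _ = (∑ j, |d j|) * ‖x‖ := (Finset.sum_mul ..).symm

theorem StrictlyCopositive.isBounded_sublevel {M : Matrix ι ι ℝ} (hM : M.StrictlyCopositive)
    (d : ι → ℝ) (e C : ℝ) :
    IsBounded {x : ι → ℝ | 0 ≤ x ∧ x ⬝ᵥ M *ᵥ x + d ⬝ᵥ x + e ≤ C} := by
  obtain ⟨δ, hδ, hM⟩ := hM.exists_pos_mul_sq_norm_le
  refine isBounded_of_forall_mul_sq_norm_le (D := ∑ j, |d j|) (C := C - e) hδ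
    fun x ⟨hx, hxC⟩ => ?_
  linarith [hM x hx, neg_abs_le (d ⬝ᵥ x), abs_dotProduct_le d x]

theorem combine_uniform_quadratics [Fintype κ] (A : Matrix ι ι ℝ) (b : ι → ℝ) (c : ℝ)
    (b' : κ → ι → ℝ) (c' α : κ → ℝ) (γ : ℝ) (β : κ → ℝ) (x : ι → ℝ) :
    γ * (x ⬝ᵥ A *ᵥ x + b ⬝ᵥ x + c) + ∑ i, β i * (α i * (x ⬝ᵥ A *ᵥ x) + b' i ⬝ᵥ x + c' i) =
      x ⬝ᵥ ((γ + ∑ i, α i * β i) • A) *ᵥ x + (γ • b + ∑ i, β i • b' i) ⬝ᵥ x +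
        (γ * c + ∑ i, β i * c' i) := by
  have hQ : ∑ i, β i * (α i * (x ⬝ᵥ A *ᵥ x)) = (∑ i, α i * β i) * (x ⬝ᵥ A *ᵥ x) := by
    rw [Finset.sum_mul]
    exact Finset.sum_congr rfl fun i _ => by ring
  simp only [smul_mulVec, dotProduct_smul, add_dotProduct, smul_dotProduct, sum_dotProduct,
    smul_eq_mul, mul_add, Finset.sum_add_distrib]
  linear_combination hQ

end Matrix

theorem stmt_17_general (n m : ℕ)
    (A : Matrix (Fin n) (Fin n) ℝ)
    (b : Fin n → ℝ) (c : ℝ)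
    (b' : Fin (m + 1) → Fin n → ℝ) (c' : Fin (m + 1) → ℝ) (α : Fin (m + 1) → ℝ)
    (f : (Fin n → ℝ) → ℝ) (hf : ∀ x, f x = x ⬝ᵥ A *ᵥ x + b ⬝ᵥ x + c)
    (g : Fin (m + 1) → (Fin n → ℝ) → ℝ)
    (hg : ∀ i x, g i x = α i * (x ⬝ᵥ A *ᵥ x) + b' i ⬝ᵥ x + c' i)
    (γ : ℝ) (hγ : 0 ≤ γ) (β : Fin (m + 1) → ℝ) (hβ : ∀ i, 0 ≤ β i)
    (hcop : ∀ x : Fin n → ℝ, (∀ j, 0 ≤ x j) → x ≠ 0 →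
      0 < x ⬝ᵥ ((γ + ∑ i, α i * β i) • A) *ᵥ x) :
    IsClosed ((fun x : Fin n → ℝ => ((fun i => g i x), f x)) '' {x | ∀ j, 0 ≤ x j}
      + {q : (Fin (m + 1) → ℝ) × ℝ | (∀ i, 0 ≤ q.1 i) ∧ 0 ≤ q.2}) := by
  obtain rfl : f = _ := funext hf
  obtain rfl : g = _ := funext fun i => funext (hg i)
  have hM : ((γ + ∑ i, α i * β i) • A).StrictlyCopositive := hcop
  refine isClosed_image_add_of_isBounded_sublevel (ℓ := fun q => γ * q.2 + ∑ i, β i * q.1 i)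
    isClosed_Ici (isClosed_Ici : IsClosed (Ici (0 : (Fin (m + 1) → ℝ) × ℝ)))
    (by fun_prop) (by fun_prop) (fun v k hk => ?_) (fun C => ?_)
  · have hk : 0 ≤ γ * k.2 + ∑ i, β i * k.1 i :=
      add_nonneg (mul_nonneg hγ hk.2) (Finset.sum_nonneg fun i _ => mul_nonneg (hβ i) (hk.1 i))
    simp only [Prod.snd_add, Prod.fst_add, Pi.add_apply, mul_add, Finset.sum_add_distrib]
    linarith
  · exact (hM.isBounded_sublevel _ _ C).subset fun x ⟨hx, hxC⟩ =>
      ⟨hx, (combine_uniform_quadratics A b c b' c' α γ β x).symm.trans_le hxC⟩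

/-- For the uniform nonnegative quadratic program (P2) with
f(x) = xᵀAx + bᵀx + c and gᵢ(x) = αᵢ·xᵀAx + bᵢᵀx + cᵢ, if there exist γ ≥ 0 and
βᵢ ≥ 0 such that (γ + Σᵢ αᵢβᵢ)·A is strictly copositive, then the set
𝒜_{P2} = {(g₀(x), …, g_m(x), f(x)) : x ∈ ℝ^n_+} + ℝ^{m+2}_+ is closed. -/
theorem stmt_17 (n m : ℕ) (hn : 1 ≤ n)
    (A : Matrix (Fin n) (Fin n) ℝ) (hA : A.IsSymm)
    (b : Fin n → ℝ) (c : ℝ)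
    (b' : Fin (m + 1) → Fin n → ℝ) (c' : Fin (m + 1) → ℝ) (α : Fin (m + 1) → ℝ)
    (f : (Fin n → ℝ) → ℝ) (hf : ∀ x, f x = x ⬝ᵥ A *ᵥ x + b ⬝ᵥ x + c)
    (g : Fin (m + 1) → (Fin n → ℝ) → ℝ)
    (hg : ∀ i x, g i x = α i * (x ⬝ᵥ A *ᵥ x) + b' i ⬝ᵥ x + c' i)
    (γ : ℝ) (hγ : 0 ≤ γ) (β : Fin (m + 1) → ℝ) (hβ : ∀ i, 0 ≤ β i)
    (hcop : ∀ x : Fin n → ℝ, (∀ j, 0 ≤ x j) → x ≠ 0 →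
      0 < x ⬝ᵥ ((γ + ∑ i, α i * β i) • A) *ᵥ x) :
    IsClosed ((fun x : Fin n → ℝ => ((fun i => g i x), f x)) '' {x | ∀ j, 0 ≤ x j}
      + {q : (Fin (m + 1) → ℝ) × ℝ | (∀ i, 0 ≤ q.1 i) ∧ 0 ≤ q.2}) :=
  stmt_17_general n m A b c b' c' α f hf g hg γ hγ β hβ hcop
end

section
/- Suppose (a) there exist γ ≥ 0 and β_0, …, β_m ≥ 0 such that (γ + Σ_{i=0}^m α_i β_i)·A is strictly copositive, and (b) A is positive semidefinite and has an eigenvector d ∈ ℝ^n_+ corresponding to a nonzero eigenvalue such that (b_i − α_i b)ᵀd = 0 for every i = 0, 1, …, m. Then the set 𝒜_{P2} = {(g_0(x), g_1(x), …, g_m(x), f(x)) : x ∈ ℝ^n_+} + ℝ^{m+2}_+ is closed and convex; i.e., problem (P2) is strongly convexifiable. -/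
/-!
Write the map as `F x = q x • p + L x` with `q x = xᵀAx`, `p = (α, 1)` and `L` affine.

Convexity: for `x, y ≥ 0` and `z = a x + b y`, convexity of `q` (as `A ⪰ 0`) gives
`a F x + b F y = F z + s • p` with `s ≥ 0`. Along the direction `d ≥ 0` the affine part moves
inside `ℝ p` (by `(bᵢ - αᵢ b)ᵀd = 0`) while `q` grows quadratically (`dᵀAd = μ‖d‖² > 0`), so some
`w = z + t d ≥ 0` has `F w = F z + s • p`.

Closedness: the monotone functional `ℓ u = γ u_f + ∑ βᵢ uᵢ` turns `F` into
`(γ + ∑ αᵢβᵢ) q + affine`, which is coercive on the orthant by strict copositivity. Near any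
point of the closure only a compact sublevel piece of the orthant matters, and the sum of a
compact set and the closed cone `Ici 0` is closed.
-/

open Pointwise Matrix Set Filter

section OrderedImage

variable {E P : Type*} [AddCommGroup P] [PartialOrder P] [IsOrderedAddMonoid P]

theorem isClosed_image_add_Ici_zero [TopologicalSpace E] [TopologicalSpace P]
    [IsTopologicalAddGroup P] [ClosedIciTopology P] {F : E → P} (hF : Continuous F)
    {ℓ : P → ℝ} (hℓ : Continuous ℓ) (hℓm : Monotone ℓ) {K : Set E}
    (hK : ∀ B, IsCompact {x ∈ K | ℓ (F x) ≤ B}) : IsClosed (F '' K + Ici 0) := by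
  refine isClosed_of_closure_subset fun u hu => ?_
  set U := {v | ℓ v < ℓ u + 1}
  have hsub : (F '' K + Ici 0) ∩ U ⊆ F '' {x ∈ K | ℓ (F x) ≤ ℓ u + 1} + Ici 0 := by
    rintro _ ⟨⟨_, ⟨x, hx, rfl⟩, v, hv, rfl⟩, hlt⟩
    exact ⟨F x, ⟨x, ⟨hx, (hℓm (le_add_of_nonneg_right hv)).trans hlt.le⟩, rfl⟩, v, hv, rfl⟩
  have hclosed : IsClosed (F '' {x ∈ K | ℓ (F x) ≤ ℓ u + 1} + Ici 0) :=
    isClosed_Ici.add_left_of_isCompact ((hK _).image hF)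
  have hu' : u ∈ closure ((F '' K + Ici 0) ∩ U) :=
    (isOpen_lt hℓ continuous_const).closure_inter ⟨hu, show ℓ u < ℓ u + 1 from lt_add_one _⟩
  exact add_subset_add_right (image_mono (sep_subset _ _))
    (closure_minimal hsub hclosed hu')

theorem convex_image_add_Ici_zero [AddCommGroup E] [Module ℝ E] [Module ℝ P] [PosSMulMono ℝ P]
    {K : Set E} (hK : Convex ℝ K) {q : E → ℝ} (hq : ConvexOn ℝ K q) (p : P) (L : E →ᵃ[ℝ] P)
    (hlift : ∀ z ∈ K, ∀ s : ℝ, 0 ≤ s → ∃ w ∈ K, q w • p + L w = q z • p + L z + s • p) :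
    Convex ℝ ((fun x => q x • p + L x) '' K + Ici 0) := by
  rintro _ ⟨_, ⟨x, hx, rfl⟩, u, hu, rfl⟩ _ ⟨_, ⟨y, hy, rfl⟩, v, hv, rfl⟩ a b ha hb hab
  obtain ⟨w, hw, hFw⟩ := hlift _ (hK hx hy ha hb hab) (a * q x + b * q y - q (a • x + b • y))
    (sub_nonneg.2 (hq.2 hx hy ha hb hab))
  refine ⟨_, ⟨w, hw, rfl⟩, a • u + b • v, add_nonneg (smul_nonneg ha hu) (smul_nonneg hb hv), ?_⟩
  simp only [hFw, Convex.combo_affine_apply hab]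
  module

end OrderedImage

section Coercive

variable {E : Type*} [NormedAddCommGroup E]

theorem isBounded_of_mul_norm_sq_le {s : Set E} {ε C D : ℝ} (hε : 0 < ε)
    (h : ∀ x ∈ s, ε * ‖x‖ ^ 2 ≤ C * ‖x‖ + D) : Bornology.IsBounded s := by
  refine isBounded_iff_forall_norm_le.2 ⟨max 1 ((|C| + |D|) / ε), fun x hx => ?_⟩
  by_contra! hlt
  have h1 : 1 < ‖x‖ := (le_max_left _ _).trans_lt hlt
  have h2 : |C| + |D| < ε * ‖x‖ := by
    rw [← div_lt_iff₀' hε]; exact (le_max_right _ _).trans_lt hlt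
  nlinarith [h x hx, le_abs_self C, le_abs_self D, abs_nonneg D,
    mul_lt_mul_of_pos_left h2 (zero_lt_one.trans h1)]

variable [NormedSpace ℝ E] {K : Set E} {Q : E → ℝ}

theorem exists_pos_mul_norm_sq_le [ProperSpace E] (hK : IsClosed K)
    (hKsmul : ∀ x ∈ K, ∀ t : ℝ, 0 ≤ t → t • x ∈ K) (hQ : Continuous Q)
    (hQsmul : ∀ (t : ℝ) x, Q (t • x) = t ^ 2 * Q x) (hQpos : ∀ x ∈ K, x ≠ 0 → 0 < Q x) :
    ∃ ε > 0, ∀ x ∈ K, ε * ‖x‖ ^ 2 ≤ Q x := by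
  obtain ⟨ε, hε, hεQ⟩ := ((isCompact_sphere (0 : E) 1).inter_left hK).exists_forall_le'
    hQ.continuousOn fun y hy => hQpos y hy.1 (ne_zero_of_mem_unit_sphere ⟨y, hy.2⟩)
  refine ⟨ε, hε, fun x hx => ?_⟩
  rcases eq_or_ne x 0 with rfl | hx0
  · have hQ0 : Q 0 = 0 := by simpa using hQsmul 0 0
    simp [hQ0]
  · have hnx : 0 < ‖x‖ := norm_pos_iff.2 hx0
    have hy : ‖x‖⁻¹ • x ∈ K ∩ Metric.sphere 0 1 :=
      ⟨hKsmul x hx _ (inv_nonneg.2 hnx.le), by simp [norm_smul, hnx.ne']⟩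
    calc ε * ‖x‖ ^ 2 ≤ Q (‖x‖⁻¹ • x) * ‖x‖ ^ 2 := by gcongr; exact hεQ _ hy
      _ = Q x := by rw [hQsmul]; field_simp

theorem isCompact_sublevel_of_coercive [FiniteDimensional ℝ E] (hK : IsClosed K)
    (hKsmul : ∀ x ∈ K, ∀ t : ℝ, 0 ≤ t → t • x ∈ K) (hQ : Continuous Q)
    (hQsmul : ∀ (t : ℝ) x, Q (t • x) = t ^ 2 * Q x) (hQpos : ∀ x ∈ K, x ≠ 0 → 0 < Q x)
    (φ : E →ᵃ[ℝ] ℝ) (B : ℝ) : IsCompact {x ∈ K | Q x + φ x ≤ B} := by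
  obtain ⟨ε, hε, hεQ⟩ := exists_pos_mul_norm_sq_le hK hKsmul hQ hQsmul hQpos
  set φ' := LinearMap.toContinuousLinearMap φ.linear
  refine Metric.isCompact_of_isClosed_isBounded
    (hK.inter (isClosed_le (hQ.add φ.continuous_of_finiteDimensional) continuous_const))
    (isBounded_of_mul_norm_sq_le (C := ‖φ'‖) (D := B - φ 0) hε fun x ⟨hx, hxB⟩ => ?_)
  have hφ : φ x = φ' x + φ 0 := congrFun φ.decomp x
  have hφ' : -(‖φ'‖ * ‖x‖) ≤ φ' x := neg_le_of_abs_le (φ'.le_opNorm x)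
  linarith [hεQ x hx]

theorem isClosed_image_add_Ici_zero_of_coercive {P : Type*} [NormedAddCommGroup P]
    [NormedSpace ℝ P] [FiniteDimensional ℝ P] [PartialOrder P] [IsOrderedAddMonoid P]
    [ClosedIciTopology P] [FiniteDimensional ℝ E] (hK : IsClosed K)
    (hKsmul : ∀ x ∈ K, ∀ t : ℝ, 0 ≤ t → t • x ∈ K) (hQ : Continuous Q)
    (hQsmul : ∀ (t : ℝ) x, Q (t • x) = t ^ 2 * Q x) (p : P) (L : E →ᵃ[ℝ] P) (ℓ : P →ₗ[ℝ] ℝ)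
    (hℓ : Monotone ℓ) (hpos : ∀ x ∈ K, x ≠ 0 → 0 < ℓ p * Q x) :
    IsClosed ((fun x => Q x • p + L x) '' K + Ici 0) := by
  refine isClosed_image_add_Ici_zero (by have := L.continuous_of_finiteDimensional; fun_prop)
    ℓ.continuous_of_finiteDimensional hℓ fun B => ?_
  have hℓF : ∀ x, ℓ (Q x • p + L x) = ℓ p * Q x + (ℓ.toAffineMap.comp L) x := fun x => by
    simp [mul_comm]
  simp only [hℓF]
  exact isCompact_sublevel_of_coercive (Q := fun x => ℓ p * Q x) hK hKsmul (by fun_prop)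
    (fun t x => by rw [hQsmul]; ring) hpos _ B

end Coercive

theorem exists_nonneg_mul_sq_add_mul_eq {a b s : ℝ} (ha : 0 < a) (hs : 0 ≤ s) :
    ∃ t, 0 ≤ t ∧ a * t ^ 2 + b * t = s := by
  have htop : Tendsto (fun t : ℝ => a * t ^ 2 + b * t) atTop atTop := by
    have : Tendsto (fun t : ℝ => t * (a * t + b)) atTop atTop := tendsto_id.atTop_mul_atTop₀
      (tendsto_atTop_add_const_right _ b (tendsto_id.const_mul_atTop ha))
    exact this.congr fun t => by ring
  exact intermediate_value_Ici (a := 0) (by fun_prop) htop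
    (show s ∈ Ici (a * 0 ^ 2 + b * 0) by simpa using hs)

namespace Matrix

variable {n : Type*} [Fintype n] (A : Matrix n n ℝ)

theorem add_smul_dotProduct_mulVec_add_smul (z d : n → ℝ) (t : ℝ) :
    (z + t • d) ⬝ᵥ A *ᵥ (z + t • d) =
      z ⬝ᵥ A *ᵥ z + t * (z ⬝ᵥ A *ᵥ d + d ⬝ᵥ A *ᵥ z) + t ^ 2 * (d ⬝ᵥ A *ᵥ d) := by
  simp only [mulVec_add, mulVec_smul, dotProduct_add, add_dotProduct, dotProduct_smul,
    smul_dotProduct, smul_eq_mul]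
  ring

theorem smul_dotProduct_mulVec_smul_s18 (t : ℝ) (x : n → ℝ) :
    (t • x) ⬝ᵥ A *ᵥ (t • x) = t ^ 2 * (x ⬝ᵥ A *ᵥ x) := by
  simpa using add_smul_dotProduct_mulVec_add_smul A 0 x t

theorem exists_nonneg_add_smul_dotProduct_mulVec_eq {d : n → ℝ} (hd : 0 < d ⬝ᵥ A *ᵥ d)
    (z : n → ℝ) (e : ℝ) {s : ℝ} (hs : 0 ≤ s) :
    ∃ t, 0 ≤ t ∧ (z + t • d) ⬝ᵥ A *ᵥ (z + t • d) + t * e = z ⬝ᵥ A *ᵥ z + s := by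
  obtain ⟨t, ht, hts⟩ := exists_nonneg_mul_sq_add_mul_eq (b := z ⬝ᵥ A *ᵥ d + d ⬝ᵥ A *ᵥ z + e) hd hs
  exact ⟨t, ht, by rw [add_smul_dotProduct_mulVec_add_smul]; linear_combination hts⟩

variable {A}

theorem PosSemidef.convexOn_dotProduct_mulVec (hA : A.PosSemidef) :
    ConvexOn ℝ univ fun x => x ⬝ᵥ A *ᵥ x := by
  refine ⟨convex_univ, fun x _ y _ a b ha hb hab => ?_⟩
  have hxy : 0 ≤ (x - y) ⬝ᵥ A *ᵥ (x - y) := by simpa using hA.dotProduct_mulVec_nonneg (x - y)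
  have hgap : a * (x ⬝ᵥ A *ᵥ x) + b * (y ⬝ᵥ A *ᵥ y) - (a • x + b • y) ⬝ᵥ A *ᵥ (a • x + b • y) =
      a * b * ((x - y) ⬝ᵥ A *ᵥ (x - y)) := by
    obtain rfl : b = 1 - a := by linarith
    simp only [mulVec_add, mulVec_sub, mulVec_smul, dotProduct_add, dotProduct_sub, add_dotProduct,
      sub_dotProduct, dotProduct_smul, smul_dotProduct, smul_eq_mul]
    ring
  simp only [smul_eq_mul]
  linarith [mul_nonneg (mul_nonneg ha hb) hxy]

theorem PosSemidef.dotProduct_mulVec_pos_of_mulVec_eq_smul (hA : A.PosSemidef) {d : n → ℝ}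
    (hd : d ≠ 0) {μ : ℝ} (hμ : μ ≠ 0) (heig : A *ᵥ d = μ • d) : 0 < d ⬝ᵥ A *ᵥ d := by
  have hdd : 0 < d ⬝ᵥ d := by simpa using dotProduct_self_star_pos_iff.2 hd
  have hval : d ⬝ᵥ A *ᵥ d = μ * (d ⬝ᵥ d) := by rw [heig, dotProduct_smul, smul_eq_mul]
  have hnn : 0 ≤ d ⬝ᵥ A *ᵥ d := by simpa using hA.dotProduct_mulVec_nonneg d
  exact lt_of_le_of_ne hnn (by rw [hval]; exact (mul_ne_zero hμ hdd.ne').symm)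

theorem PosSemidef.convex_image_add_Ici_zero {P : Type*} [AddCommGroup P] [PartialOrder P]
    [IsOrderedAddMonoid P] [Module ℝ P] [PosSMulMono ℝ P] (hA : A.PosSemidef) {d : n → ℝ}
    (hd : 0 ≤ d) (hAd : 0 < d ⬝ᵥ A *ᵥ d) (p : P) (L : (n → ℝ) →ᵃ[ℝ] P) {e : ℝ}
    (hLd : L.linear d = e • p) :
    Convex ℝ ((fun x => (x ⬝ᵥ A *ᵥ x) • p + L x) '' Ici 0 + Ici 0) := by
  refine _root_.convex_image_add_Ici_zero (convex_Ici 0)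
    (hA.convexOn_dotProduct_mulVec.subset (subset_univ _) (convex_Ici 0)) p L
    fun z hz s hs => ?_
  obtain ⟨t, ht, hts⟩ := exists_nonneg_add_smul_dotProduct_mulVec_eq A hAd z e hs
  refine ⟨z + t • d, mem_Ici.2 (add_nonneg hz (smul_nonneg ht hd)), ?_⟩
  have hL : L (z + t • d) = L z + (t * e) • p := by
    rw [add_comm, ← vadd_eq_add, L.map_vadd, vadd_eq_add, map_smul, hLd, smul_smul, add_comm]
  rw [hL]
  linear_combination (norm := module) hts • p

end Matrix

theorem stmt_18_general (n m : ℕ)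
    (A : Matrix (Fin n) (Fin n) ℝ)
    (b : Fin n → ℝ) (c : ℝ)
    (b' : Fin (m + 1) → Fin n → ℝ) (c' : Fin (m + 1) → ℝ) (α : Fin (m + 1) → ℝ)
    (f : (Fin n → ℝ) → ℝ) (hf : ∀ x, f x = x ⬝ᵥ A *ᵥ x + b ⬝ᵥ x + c)
    (g : Fin (m + 1) → (Fin n → ℝ) → ℝ)
    (hg : ∀ i x, g i x = α i * (x ⬝ᵥ A *ᵥ x) + b' i ⬝ᵥ x + c' i)
    (γ : ℝ) (hγ : 0 ≤ γ) (β : Fin (m + 1) → ℝ) (hβ : ∀ i, 0 ≤ β i)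
    (hcop : ∀ x : Fin n → ℝ, (∀ j, 0 ≤ x j) → x ≠ 0 →
      0 < x ⬝ᵥ ((γ + ∑ i, α i * β i) • A) *ᵥ x)
    (hpsd : A.PosSemidef)
    (d : Fin n → ℝ) (hd0 : d ≠ 0) (hdpos : ∀ j, 0 ≤ d j)
    (μ : ℝ) (hμ : μ ≠ 0) (heig : A *ᵥ d = μ • d)
    (horth : ∀ i, (b' i - α i • b) ⬝ᵥ d = 0) :
    IsClosed ((fun x : Fin n → ℝ => ((fun i => g i x), f x)) '' {x | ∀ j, 0 ≤ x j}
      + {q : (Fin (m + 1) → ℝ) × ℝ | (∀ i, 0 ≤ q.1 i) ∧ 0 ≤ q.2}) ∧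
    Convex ℝ ((fun x : Fin n → ℝ => ((fun i => g i x), f x)) '' {x | ∀ j, 0 ≤ x j}
      + {q : (Fin (m + 1) → ℝ) × ℝ | (∀ i, 0 ≤ q.1 i) ∧ 0 ≤ q.2}) := by
  set p : (Fin (m + 1) → ℝ) × ℝ := (α, 1)
  set L : (Fin n → ℝ) →ᵃ[ℝ] (Fin (m + 1) → ℝ) × ℝ :=
    ((mulVecLin (of b')).prod (dotProductBilin ℝ ℝ b)).toAffineMap + AffineMap.const ℝ _ (c', c)
  set ℓ : (Fin (m + 1) → ℝ) × ℝ →ₗ[ℝ] ℝ :=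
    γ • LinearMap.snd ℝ _ ℝ + ∑ i, β i • (LinearMap.proj i ∘ₗ LinearMap.fst ℝ _ ℝ)
  have hF : (fun x => ((fun i => g i x), f x)) = fun x => (x ⬝ᵥ A *ᵥ x) • p + L x := by
    funext x
    ext <;> simp [hf, hg, L, p, mulVec, dotProductBilin] <;> ring
  have hK : {x : Fin n → ℝ | ∀ j, 0 ≤ x j} = Ici 0 := by ext; simp [Pi.le_def]
  have hP : {q : (Fin (m + 1) → ℝ) × ℝ | (∀ i, 0 ≤ q.1 i) ∧ 0 ≤ q.2} = Ici 0 := by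
    ext; simp [Prod.le_def, Pi.le_def]
  have hℓ : Monotone ℓ := fun u v huv => by
    simp [ℓ]
    gcongr with i
    · exact huv.2
    · exact hβ i
    · exact huv.1 i
  have hcop' : ∀ x ∈ Ici (0 : Fin n → ℝ), x ≠ 0 → 0 < ℓ p * (x ⬝ᵥ A *ᵥ x) := fun x hx hx0 => by
    simpa [ℓ, p, smul_mulVec, dotProduct_smul, mul_comm] using hcop x hx hx0
  have hLd : L.linear d = (b ⬝ᵥ d) • p := by
    have hb' : ∀ i, b' i ⬝ᵥ d = α i * (b ⬝ᵥ d) := fun i => by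
      simpa [sub_dotProduct, sub_eq_zero] using horth i
    ext <;> simp [L, p, mulVec, dotProductBilin, hb', mul_comm]
  rw [hF, hK, hP]
  exact ⟨isClosed_image_add_Ici_zero_of_coercive isClosed_Ici
      (fun x hx t ht => mem_Ici.2 (smul_nonneg ht (mem_Ici.1 hx))) (by fun_prop)
      (smul_dotProduct_mulVec_smul_s18 A) p L ℓ hℓ hcop',
    hpsd.convex_image_add_Ici_zero hdpos
      (hpsd.dotProduct_mulVec_pos_of_mulVec_eq_smul hd0 hμ heig) p L hLd⟩

/-- For the uniform nonnegative quadratic program (P2), if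
(a) (γ + Σᵢ αᵢβᵢ)·A is strictly copositive for some γ ≥ 0, βᵢ ≥ 0, and
(b) A is positive semidefinite with an eigenvector d ∈ ℝ^n_+ for a nonzero
eigenvalue μ satisfying (bᵢ − αᵢb)ᵀd = 0 for all i, then
𝒜_{P2} = {(g₀(x), …, g_m(x), f(x)) : x ∈ ℝ^n_+} + ℝ^{m+2}_+ is closed and convex,
i.e. (P2) is strongly convexifiable. -/
theorem stmt_18 (n m : ℕ) (hn : 1 ≤ n)
    (A : Matrix (Fin n) (Fin n) ℝ) (hA : A.IsSymm)
    (b : Fin n → ℝ) (c : ℝ)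
    (b' : Fin (m + 1) → Fin n → ℝ) (c' : Fin (m + 1) → ℝ) (α : Fin (m + 1) → ℝ)
    (f : (Fin n → ℝ) → ℝ) (hf : ∀ x, f x = x ⬝ᵥ A *ᵥ x + b ⬝ᵥ x + c)
    (g : Fin (m + 1) → (Fin n → ℝ) → ℝ)
    (hg : ∀ i x, g i x = α i * (x ⬝ᵥ A *ᵥ x) + b' i ⬝ᵥ x + c' i)
    (γ : ℝ) (hγ : 0 ≤ γ) (β : Fin (m + 1) → ℝ) (hβ : ∀ i, 0 ≤ β i)
    (hcop : ∀ x : Fin n → ℝ, (∀ j, 0 ≤ x j) → x ≠ 0 →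
      0 < x ⬝ᵥ ((γ + ∑ i, α i * β i) • A) *ᵥ x)
    (hpsd : A.PosSemidef)
    (d : Fin n → ℝ) (hd0 : d ≠ 0) (hdpos : ∀ j, 0 ≤ d j)
    (μ : ℝ) (hμ : μ ≠ 0) (heig : A *ᵥ d = μ • d)
    (horth : ∀ i, (b' i - α i • b) ⬝ᵥ d = 0) :
    IsClosed ((fun x : Fin n → ℝ => ((fun i => g i x), f x)) '' {x | ∀ j, 0 ≤ x j}
      + {q : (Fin (m + 1) → ℝ) × ℝ | (∀ i, 0 ≤ q.1 i) ∧ 0 ≤ q.2}) ∧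
    Convex ℝ ((fun x : Fin n → ℝ => ((fun i => g i x), f x)) '' {x | ∀ j, 0 ≤ x j}
      + {q : (Fin (m + 1) → ℝ) × ℝ | (∀ i, 0 ≤ q.1 i) ∧ 0 ≤ q.2}) :=
  stmt_18_general n m A b c b' c' α f hf g hg γ hγ β hβ hcop hpsd d hd0 hdpos μ hμ heig horth
end
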